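/- arXiv:2309.14848 — 5 statements merged into one kernel-verified Lean document; each statement's English description precedes it below -/
import Mathlib

section
/- Let K be a proper simplicial complex on [n] without ghost vertices. Then K is roughly weighted with some strictly positive weights and positive quota if and only if K admits a non-strict K-submodular function. (This is the combinatorial form of the paper's Theorem 1.2: existence of a non-strict K-submodular function is equivalent to pseudo-polytopality of the canonical fan, i.e. to the canonical fan refining the normal fan of a convex polytope.) -/
open Finset

/-- A simplicial complex on `[n]`: a family of subsets containing `∅` and
closed under taking subsets. -/
def IsComplex (n : ℕ) (K : Set (Finset (Fin n))) : Prop :=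
  ∅ ∈ K ∧ ∀ A B : Finset (Fin n), A ⊆ B → B ∈ K → A ∈ K

/-- No ghost vertices: every singleton is a face. -/
def NoGhost (n : ℕ) (K : Set (Finset (Fin n))) : Prop :=
  ∀ i : Fin n, ({i} : Finset (Fin n)) ∈ K

/-- `K` is a threshold complex: there are strictly positive weights `w` and a
quota `q` with `A ∈ K ↔ w(A) < q`. -/
def IsThreshold (n : ℕ) (K : Set (Finset (Fin n))) : Prop :=
  ∃ (w : Fin n → ℝ) (q : ℝ), (∀ i, 0 < w i) ∧
    ∀ A : Finset (Fin n), A ∈ K ↔ ∑ i ∈ A, w i < q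

/-- A K-submodular function: a pair of vectors `x y : [n] → ℝ` satisfying, for
every ridge datum `[n] = X1 ⊔ {c1,c2} ⊔ X2` (so `X2 = (X1 ∪ {c1,c2})ᶜ`) with
`X1 ∈ K` and `X2 ∈ K°` (i.e. `X2ᶜ = X1 ∪ {c1,c2} ∉ K`):
the Λ-, V- and X-configuration inequalities. -/
def IsKSubmodular (n : ℕ) (K : Set (Finset (Fin n))) (x y : Fin n → ℝ) : Prop :=
  ∀ (X1 : Finset (Fin n)) (c1 c2 : Fin n),
    c1 ≠ c2 → c1 ∉ X1 → c2 ∉ X1 → X1 ∈ K → insert c1 (insert c2 X1) ∉ K →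
    ((insert c1 X1 ∈ K → insert c2 X1 ∈ K →
        ∑ i ∈ X1, x i + x c1 + x c2 > ∑ j ∈ (insert c1 (insert c2 X1))ᶜ, y j) ∧
     (insert c1 X1 ∉ K → insert c2 X1 ∉ K →
        ∑ j ∈ (insert c1 (insert c2 X1))ᶜ, y j + y c1 + y c2 > ∑ i ∈ X1, x i) ∧
     (insert c2 X1 ∈ K → insert c1 X1 ∉ K → x c2 + y c2 > 0))

/-- A non-strict K-submodular function: the Λ- and V-inequalities are non-strict,
and for X-configurations with distinguished element `c2` one requires
`x c2 > 0` and `y c2 > 0`. -/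
def IsNonStrictKSubmodular (n : ℕ) (K : Set (Finset (Fin n))) (x y : Fin n → ℝ) : Prop :=
  ∀ (X1 : Finset (Fin n)) (c1 c2 : Fin n),
    c1 ≠ c2 → c1 ∉ X1 → c2 ∉ X1 → X1 ∈ K → insert c1 (insert c2 X1) ∉ K →
    ((insert c1 X1 ∈ K → insert c2 X1 ∈ K →
        ∑ i ∈ X1, x i + x c1 + x c2 ≥ ∑ j ∈ (insert c1 (insert c2 X1))ᶜ, y j) ∧
     (insert c1 X1 ∉ K → insert c2 X1 ∉ K →
        ∑ j ∈ (insert c1 (insert c2 X1))ᶜ, y j + y c1 + y c2 ≥ ∑ i ∈ X1, x i) ∧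
     (insert c2 X1 ∈ K → insert c1 X1 ∉ K → 0 < x c2 ∧ 0 < y c2))

/-- `K` (the set of losing coalitions) is roughly weighted with strictly positive
weights `w` and quota `q > 0`. -/
def RoughlyWeighted (n : ℕ) (K : Set (Finset (Fin n))) (w : Fin n → ℝ) (q : ℝ) : Prop :=
  (∀ i, 0 < w i) ∧ 0 < q ∧ ∀ X : Finset (Fin n),
    (q < ∑ i ∈ X, w i → X ∉ K) ∧ (∑ i ∈ X, w i < q → X ∈ K)

namespace RWproof

variable {n : ℕ} {K : Set (Finset (Fin n))} {x y : Fin n → ℝ}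

lemma nonface_up (hK : IsComplex n K) {A B : Finset (Fin n)}
    (hA : A ∉ K) (hAB : A ⊆ B) : B ∉ K := fun hB => hA (hK.2 A B hAB hB)

lemma univ_not_mem (hK : IsComplex n K) (hproper : K ≠ Set.univ) :
    (univ : Finset (Fin n)) ∉ K := by
  intro h
  apply hproper
  ext S; simp only [Set.mem_univ, iff_true]
  exact hK.2 S univ (subset_univ S) h

lemma sum_insert_insert (f : Fin n → ℝ) {X1 : Finset (Fin n)} {c1 c2 : Fin n}
    (h12 : c1 ≠ c2) (h1 : c1 ∉ X1) (h2 : c2 ∉ X1) :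
    ∑ i ∈ insert c1 (insert c2 X1), f i = f c1 + f c2 + ∑ i ∈ X1, f i := by
  rw [Finset.sum_insert (by simp [h12, h1]), Finset.sum_insert h2]; ring

lemma sum_compl_eq (f : Fin n → ℝ) (A : Finset (Fin n)) :
    ∑ i ∈ Aᶜ, f i = ∑ i, f i - ∑ i ∈ A, f i := by
  have := Finset.sum_compl_add_sum A f
  linarith

/-- The forward direction: rough weights give a non-strict K-submodular pair. -/
lemma forward (hK : IsComplex n K) (hproper : K ≠ Set.univ)
    (w : Fin n → ℝ) (q : ℝ) (h : RoughlyWeighted n K w q) :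
    ∃ x y : Fin n → ℝ, IsNonStrictKSubmodular n K x y := by
  classical
  obtain ⟨hw, hq, hsand⟩ := h
  have hface : ∀ X : Finset (Fin n), X ∈ K → ∑ i ∈ X, w i ≤ q := by
    intro X hX
    by_contra h'
    exact (hsand X).1 (lt_of_not_ge h') hX
  have hnonface : ∀ X : Finset (Fin n), X ∉ K → q ≤ ∑ i ∈ X, w i := by
    intro X hX
    by_contra h'
    exact hX ((hsand X).2 (lt_of_not_ge h'))
  set W : ℝ := ∑ i, w i with hW
  have hWq : q ≤ W := hnonface univ (univ_not_mem hK hproper)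
  -- choose t
  have hn0 : (univ : Finset (Fin n)).Nonempty := by
    by_contra h'
    have : (univ : Finset (Fin n)) = ∅ := not_nonempty_iff_eq_empty.mp h'
    exact univ_not_mem hK hproper (this ▸ hK.1)
  obtain ⟨i0, -, hi0min⟩ := Finset.exists_min_image univ w hn0
  have hm0 : 0 < w i0 := hw i0
  -- t > 0 and key properties
  obtain ⟨t, ht0, htΛ, htV⟩ :
      ∃ t : ℝ, 0 < t ∧ (∀ r : ℝ, q ≤ r → t * (W - r) ≤ r) ∧
        (∀ X1 : Finset (Fin n), ∑ i ∈ X1, w i ≤ q →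
          (∀ c1 c2 : Fin n, c1 ≠ c2 → c1 ∉ X1 → c2 ∉ X1 →
            ∑ i ∈ X1, w i ≤ t * (W - ∑ i ∈ X1, w i))) := by
    rcases eq_or_lt_of_le hWq with heq | hlt
    · -- W = q
      refine ⟨q / (2 * w i0), by positivity, ?_, ?_⟩
      · intro r hr
        have h1 : W - r ≤ 0 := by linarith [heq]
        nlinarith [div_pos hq (by positivity : (0:ℝ) < 2 * w i0)]
      · intro X1 hX1 c1 c2 h12 h1 h2
        have hc : w c1 + w c2 ≤ W - ∑ i ∈ X1, w i := by
          have h3 : ∑ i ∈ insert c1 (insert c2 X1), w i ≤ W := by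
            apply Finset.sum_le_sum_of_subset_of_nonneg (subset_univ _)
            intro i _ _; exact (hw i).le
          rw [sum_insert_insert w h12 h1 h2] at h3
          linarith
        have h2m : 2 * w i0 ≤ W - ∑ i ∈ X1, w i := by
          have := hi0min c1 (mem_univ c1)
          have := hi0min c2 (mem_univ c2)
          linarith
        have : q / (2 * w i0) * (2 * w i0) = q := by field_simp
        calc ∑ i ∈ X1, w i ≤ q := hX1
          _ = q / (2 * w i0) * (2 * w i0) := this.symm
          _ ≤ q / (2 * w i0) * (W - ∑ i ∈ X1, w i) := by
              apply mul_le_mul_of_nonneg_left h2m (by positivity)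
    · -- q < W
      have hWq0 : (0:ℝ) < W - q := by linarith
      have h2 : q / (W - q) * (W - q) = q := div_mul_cancel₀ q (ne_of_gt hWq0)
      refine ⟨q / (W - q), div_pos hq hWq0, ?_, ?_⟩
      · intro r hr
        have : q / (W - q) * (W - r) ≤ q / (W - q) * (W - q) := by
          apply mul_le_mul_of_nonneg_left (by linarith) (le_of_lt (div_pos hq hWq0))
        linarith
      · intro X1 hX1 c1 c2 _ _ _
        have : q / (W - q) * (W - q) ≤ q / (W - q) * (W - ∑ i ∈ X1, w i) := by
          apply mul_le_mul_of_nonneg_left (by linarith) (le_of_lt (div_pos hq hWq0))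
        linarith
  refine ⟨w, fun i => t * w i, ?_⟩
  intro X1 c1 c2 h12 h1 h2 hX1 hC
  have hCsum : ∑ i ∈ insert c1 (insert c2 X1), w i = w c1 + w c2 + ∑ i ∈ X1, w i :=
    sum_insert_insert w h12 h1 h2
  have hCq : q ≤ ∑ i ∈ insert c1 (insert c2 X1), w i := hnonface _ hC
  refine ⟨?_, ?_, ?_⟩
  · intro _ _
    have hyc : ∑ j ∈ (insert c1 (insert c2 X1))ᶜ, (fun i => t * w i) j
        = t * (W - ∑ i ∈ insert c1 (insert c2 X1), w i) := by
      rw [← Finset.mul_sum, sum_compl_eq]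
    rw [hyc]
    have := htΛ _ hCq
    linarith
  · intro _ _
    have hyc : ∑ j ∈ (insert c1 (insert c2 X1))ᶜ, (fun i => t * w i) j
        = t * (W - ∑ i ∈ insert c1 (insert c2 X1), w i) := by
      rw [← Finset.mul_sum, sum_compl_eq]
    rw [hyc]
    simp only []
    have hkey := htV X1 (hface X1 hX1) c1 c2 h12 h1 h2
    have : t * (W - ∑ i ∈ insert c1 (insert c2 X1), w i) + t * w c1 + t * w c2
        = t * (W - ∑ i ∈ X1, w i) := by rw [hCsum]; ring
    linarith
  · intro _ _
    exact ⟨hw c2, mul_pos ht0 (hw c2)⟩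


def Topp (K : Set (Finset (Fin n))) (i : Fin n) : Prop :=
  ∀ F ∈ K, i ∈ F → ∀ c, c ∉ F → insert c (F.erase i) ∈ K

open scoped Classical in
noncomputable def Tf (K : Set (Finset (Fin n))) : Finset (Fin n) := univ.filter (Topp K)

noncomputable def Tl (K : Set (Finset (Fin n))) : List (Fin n) := (Tf K).sort (· ≤ ·)

noncomputable def Tc (K : Set (Finset (Fin n))) (s : ℕ) : Finset (Fin n) :=
  ((Tl K).take s).toFinset

def lv (K : Set (Finset (Fin n))) (S : Finset (Fin n)) (s : ℕ) : Prop := S ∪ Tc K s ∈ K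


lemma top_mem_Tf {i : Fin n} : i ∈ Tf K ↔ Topp K i := by
  classical
  simp [Tf]

lemma Tl_nodup : (Tl K).Nodup := Finset.sort_nodup _ _

lemma Tl_toFinset : (Tl K).toFinset = Tf K := Finset.sort_toFinset _ _

lemma Tl_length : (Tl K).length = (Tf K).card := by
  rw [← Tl_toFinset (K := K), List.toFinset_card_of_nodup Tl_nodup]

lemma Tc_zero : Tc K 0 = ∅ := by simp [Tc]

lemma Tc_subset {s : ℕ} : Tc K s ⊆ Tf K := by
  intro i hi
  rw [← Tl_toFinset (K := K), List.mem_toFinset]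
  exact (List.take_sublist s (Tl K)).subset ((List.mem_toFinset).mp hi)

lemma Tc_mono {s s' : ℕ} (h : s ≤ s') : Tc K s ⊆ Tc K s' := by
  intro i hi
  rw [Tc, List.mem_toFinset] at hi ⊢
  rw [List.mem_take_iff_getElem] at hi ⊢
  obtain ⟨k, hk, hik⟩ := hi
  exact ⟨k, by omega, hik⟩

lemma Tc_card {s : ℕ} (h : s ≤ (Tf K).card) : (Tc K s).card = s := by
  rw [Tc, List.toFinset_card_of_nodup (Tl_nodup.sublist (List.take_sublist s (Tl K))),
    List.length_take]
  rw [← Tl_length (K := K)] at h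
  omega

lemma Tc_top : Tc K (Tf K).card = Tf K := by
  rw [Tc, ← Tl_length (K := K), List.take_length, Tl_toFinset]

lemma Tc_succ {s : ℕ} (h : s < (Tf K).card) :
    ∃ j, j ∈ Tf K ∧ j ∉ Tc K s ∧ Tc K (s + 1) = insert j (Tc K s) := by
  have hlen : s < (Tl K).length := by rw [Tl_length]; exact h
  refine ⟨(Tl K)[s], ?_, ?_, ?_⟩
  · rw [← Tl_toFinset (K := K), List.mem_toFinset]
    exact List.getElem_mem hlen
  · intro hmem
    have h1 : (Tc K s).card = s := Tc_card (le_of_lt h)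
    have h2 : (Tc K (s+1)).card = s + 1 := Tc_card h
    have : Tc K (s+1) = Tc K s := by
      apply Finset.eq_of_subset_of_card_le _ (by omega)
      intro i hi
      rw [Tc, List.mem_toFinset, List.take_succ] at hi
      rw [List.mem_append] at hi
      rcases hi with hi | hi
      · rw [Tc, List.mem_toFinset]; exact hi
      · have : (Tl K)[s]? = some ((Tl K).get ⟨s, hlen⟩) := by
          rw [List.getElem?_eq_getElem hlen]; rfl
        rw [this] at hi
        simp at hi
        subst hi
        exact hmem
    rw [this] at h2
    omega
  · rw [Tc, List.take_succ]
    have : (Tl K)[s]? = some ((Tl K)[s]) := by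
      rw [List.getElem?_eq_getElem hlen]
    rw [this]
    ext i
    simp only [List.toFinset_append, List.toFinset_cons, List.toFinset_nil, Option.toList_some,
      Finset.mem_union, Finset.mem_insert, List.mem_toFinset, Tc, LawfulSingleton.insert_empty_eq,
      Finset.mem_singleton]
    tauto



lemma lv_mono (hK : IsComplex n K) {S S' : Finset (Fin n)} {s s' : ℕ}
    (hS : S ⊆ S') (hs : s ≤ s') (h : lv K S' s') : lv K S s :=
  hK.2 _ _ (Finset.union_subset_union hS (Tc_mono hs)) h

lemma notTop_disj_Tc {S : Finset (Fin n)} (hS : ∀ i ∈ S, ¬ Topp K i) {s : ℕ} :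
    ∀ i ∈ S, i ∉ Tc K s := fun i hi hmem => hS i hi (top_mem_Tf.mp (Tc_subset hmem))

lemma lv_step (hK : IsComplex n K) {S : Finset (Fin n)} {s : ℕ}
    (hsm : s + 1 ≤ (Tf K).card) (hS : ∀ i ∈ S, ¬ Topp K i)
    (h : lv K S (s + 1)) {p : Fin n} (hp : p ∉ S) (hpt : ¬ Topp K p) :
    lv K (insert p S) s := by
  obtain ⟨j, hjT, hjTc, hTc⟩ := Tc_succ (K := K) hsm
  have hjtop : Topp K j := top_mem_Tf.mp hjT
  have hjS : j ∉ S := fun h' => hS j h' hjtop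
  have hjF : j ∈ S ∪ Tc K (s+1) := by
    rw [hTc]; exact Finset.mem_union_right _ (Finset.mem_insert_self _ _)
  have hpF : p ∉ S ∪ Tc K (s+1) := by
    rw [Finset.mem_union]
    rintro (h' | h')
    · exact hp h'
    · exact hpt (top_mem_Tf.mp (Tc_subset h'))
  have hkey := hjtop _ h hjF p hpF
  have herase : (S ∪ Tc K (s+1)).erase j = S ∪ Tc K s := by
    rw [hTc]
    ext i
    simp only [Finset.mem_erase, Finset.mem_union, Finset.mem_insert]
    constructor
    · rintro ⟨hne, hi | (hi | hi)⟩
      · exact Or.inl hi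
      · exact absurd hi hne
      · exact Or.inr hi
    · rintro (hi | hi)
      · exact ⟨fun he => hjS (he ▸ hi), Or.inl hi⟩
      · exact ⟨fun he => hjTc (he ▸ hi), Or.inr (Or.inr hi)⟩
  rw [herase] at hkey
  rw [lv, Finset.insert_union]
  exact hkey

lemma exchange_gen (hK : IsComplex n K) :
    ∀ (k : ℕ) (U V S : Finset (Fin n)), (∀ i ∈ S, ¬ Topp K i) →
    U ⊆ Tf K → V ⊆ Tf K → U.card = V.card → (U \ V).card ≤ k →
    S ∪ U ∈ K → S ∪ V ∈ K := by
  intro k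
  induction k with
  | zero =>
    intro U V S _ _ _ hcard hk h
    have : U \ V = ∅ := Finset.card_eq_zero.mp (by omega)
    have hUV : U ⊆ V := by
      intro i hi
      by_contra h'
      have : i ∈ U \ V := Finset.mem_sdiff.mpr ⟨hi, h'⟩
      simp [‹U \ V = ∅›] at this
    have : U = V := Finset.eq_of_subset_of_card_le hUV (le_of_eq hcard.symm)
    exact this ▸ h
  | succ k ih =>
    intro U V S hS hU hV hcard hk h
    by_cases hUV : (U \ V).card = 0
    · exact ih U V S hS hU hV hcard (by omega) h
    · have hpos : 0 < (U \ V).card := by omega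
      obtain ⟨i, hi⟩ := Finset.card_pos.mp hpos
      rw [Finset.mem_sdiff] at hi
      have hVU : (V \ U).Nonempty := by
        rw [← Finset.card_pos, ← Finset.card_sdiff_comm hcard]
        omega
      obtain ⟨j, hj⟩ := hVU
      rw [Finset.mem_sdiff] at hj
      have hitop : Topp K i := top_mem_Tf.mp (hU hi.1)
      have hiF : i ∈ S ∪ U := Finset.mem_union_right _ hi.1
      have hjF : j ∉ S ∪ U := by
        rw [Finset.mem_union]
        rintro (h' | h')
        · exact hS j h' (top_mem_Tf.mp (hV hj.1))
        · exact hj.2 h'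
      have hkey := hitop _ h hiF j hjF
      have hiS : i ∉ S := fun h' => hS i h' hitop
      have herase : (S ∪ U).erase i = S ∪ U.erase i := by
        ext a
        simp only [Finset.mem_erase, Finset.mem_union]
        constructor
        · rintro ⟨hne, ha | ha⟩
          · exact Or.inl ha
          · exact Or.inr ⟨hne, ha⟩
        · rintro (ha | ⟨hne, ha⟩)
          · exact ⟨fun he => hiS (he ▸ ha), Or.inl ha⟩
          · exact ⟨hne, Or.inr ha⟩
      rw [herase, ← Finset.union_insert] at hkey
      have hUcard : (insert j (U.erase i)).card = V.card := by
        rw [Finset.card_insert_of_notMem (by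
          intro h'
          exact hj.2 (Finset.erase_subset _ _ h')),
          Finset.card_erase_of_mem hi.1]
        have : 0 < U.card := Finset.card_pos.mpr ⟨i, hi.1⟩
        omega
      have hU' : insert j (U.erase i) ⊆ Tf K := by
        intro a ha
        rcases Finset.mem_insert.mp ha with rfl | ha
        · exact hV hj.1
        · exact hU (Finset.erase_subset _ _ ha)
      have hsd : (insert j (U.erase i)) \ V ⊆ (U \ V).erase i := by
        intro a ha
        rw [Finset.mem_sdiff, Finset.mem_insert] at ha
        rcases ha with ⟨rfl | ha, hav⟩
        · exact absurd hj.1 hav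
        · exact Finset.mem_erase.mpr ⟨fun he => (Finset.notMem_erase a U) (he ▸ ha),
            Finset.mem_sdiff.mpr ⟨Finset.erase_subset _ _ ha, hav⟩⟩
      have hsdcard : ((insert j (U.erase i)) \ V).card ≤ k := by
        calc ((insert j (U.erase i)) \ V).card ≤ ((U \ V).erase i).card :=
              Finset.card_le_card hsd
          _ = (U \ V).card - 1 := Finset.card_erase_of_mem (Finset.mem_sdiff.mpr hi)
          _ ≤ k := by omega
      exact ih _ V S hS hU' hV hUcard hsdcard hkey

/-- From any decomposition `S ∪ U ∈ K` with `U ⊆ Tf` we get the level version. -/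
lemma exchange_to_lv (hK : IsComplex n K) {S U : Finset (Fin n)}
    (hS : ∀ i ∈ S, ¬ Topp K i) (hU : U ⊆ Tf K) (h : S ∪ U ∈ K) : lv K S U.card := by
  have hUm : U.card ≤ (Tf K).card := Finset.card_le_card hU
  exact exchange_gen hK _ U (Tc K U.card) S hS hU Tc_subset (by rw [Tc_card hUm]) le_rfl h

lemma exchange_from_lv (hK : IsComplex n K) {S U : Finset (Fin n)}
    (hS : ∀ i ∈ S, ¬ Topp K i) (hU : U ⊆ Tf K) (h : lv K S U.card) : S ∪ U ∈ K := by
  have hUm : U.card ≤ (Tf K).card := Finset.card_le_card hU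
  exact exchange_gen hK _ (Tc K U.card) U S hS Tc_subset hU (by rw [Tc_card hUm]) le_rfl h



lemma posP (hK : IsComplex n K) (hxy : IsNonStrictKSubmodular n K x y)
    {i : Fin n} (hi : ¬ Topp K i) : 0 < x i ∧ 0 < y i := by
  rw [Topp] at hi; push_neg at hi
  obtain ⟨F, hF, hiF, c, hcF, hnc⟩ := hi
  have h1 : c ≠ i := fun he => hcF (he ▸ hiF)
  have h2 : c ∉ F.erase i := fun h' => hcF (Finset.erase_subset _ _ h')
  have h3 : i ∉ F.erase i := Finset.notMem_erase _ _
  have h4 : F.erase i ∈ K := hK.2 _ _ (Finset.erase_subset _ _) hF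
  have h5 : insert i (F.erase i) = F := Finset.insert_erase hiF
  have h6 : insert c (insert i (F.erase i)) ∉ K := by
    rw [h5]
    exact nonface_up hK hnc (Finset.insert_subset_insert c (Finset.erase_subset _ _))
  exact ((hxy (F.erase i) c i h1 h2 h3 h4 h6).2.2) (by rw [h5]; exact hF) hnc

lemma helperV (hK : IsComplex n K) (hxy : IsNonStrictKSubmodular n K x y)
    {F : Finset (Fin n)} {c1 c2 : Fin n}
    (h12 : c1 ≠ c2) (h1 : c1 ∉ F) (h2 : c2 ∉ F) (hF : F ∈ K)
    (hn1 : insert c1 F ∉ K) (hn2 : insert c2 F ∉ K) :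
    ∑ i ∈ F, (x i + y i) ≤ ∑ i, y i := by
  have hC : insert c1 (insert c2 F) ∉ K :=
    nonface_up hK hn1 (Finset.insert_subset_insert c1 (Finset.subset_insert c2 F))
  have hkey := (hxy F c1 c2 h12 h1 h2 hF hC).2.1 hn1 hn2
  rw [sum_compl_eq, sum_insert_insert y h12 h1 h2] at hkey
  rw [Finset.sum_add_distrib]
  linarith

lemma helperL (hK : IsComplex n K) (hxy : IsNonStrictKSubmodular n K x y)
    {X1 : Finset (Fin n)} {c1 c2 : Fin n}
    (h12 : c1 ≠ c2) (h1 : c1 ∉ X1) (h2 : c2 ∉ X1) (hF : X1 ∈ K)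
    (hi1 : insert c1 X1 ∈ K) (hi2 : insert c2 X1 ∈ K)
    (hC : insert c1 (insert c2 X1) ∉ K) :
    ∑ i, y i ≤ ∑ i ∈ insert c1 (insert c2 X1), (x i + y i) := by
  have hkey := (hxy X1 c1 c2 h12 h1 h2 hF hC).1 hi1 hi2
  rw [sum_compl_eq, sum_insert_insert y h12 h1 h2] at hkey
  rw [sum_insert_insert (fun i => x i + y i) h12 h1 h2, Finset.sum_add_distrib]
  linarith

lemma vetTop (hK : IsComplex n K) {c : Fin n} (h : univ.erase c ∈ K) : Topp K c := by
  intro F hF hcF d hdF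
  apply hK.2 _ _ _ h
  intro a ha
  rcases Finset.mem_insert.mp ha with rfl | ha
  · exact Finset.mem_erase.mpr ⟨fun he => hdF (he ▸ hcF), mem_univ _⟩
  · exact Finset.mem_erase.mpr ⟨(Finset.mem_erase.mp ha).1, mem_univ _⟩


open scoped Classical in
/-- The V-configuration bound for a tight face pair. -/
lemma Vstar (hK : IsComplex n K) (hproper : K ≠ Set.univ)
    (hxy : IsNonStrictKSubmodular n K x y)
    {Z : Finset (Fin n)} {s : ℕ} (hs : s ≤ (Tf K).card)
    (hZP : ∀ i ∈ Z, ¬ Topp K i) (hlv : lv K Z s)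
    (hmax : ∀ p, ¬ Topp K p → p ∉ Z → ¬ lv K (insert p Z) s)
    (htop : s = (Tf K).card ∨ ¬ lv K Z (s + 1))
    (hvet : s = (Tf K).card ∨ ∀ c : Fin n, univ.erase c ∉ K) :
    ∑ i ∈ Z, (x i + y i) + ∑ i ∈ Tc K s, (x i + y i) ≤ ∑ i, y i := by
  have hdisj : Disjoint Z (Tc K s) := Finset.disjoint_left.mpr (notTop_disj_Tc hZP)
  have hsplit : ∑ i ∈ Z ∪ Tc K s, (x i + y i)
      = ∑ i ∈ Z, (x i + y i) + ∑ i ∈ Tc K s, (x i + y i) := Finset.sum_union hdisj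
  rw [← hsplit]
  have hFK : Z ∪ Tc K s ∈ K := hlv
  have hmemF : ∀ p, ¬ Topp K p → p ∉ Z → p ∉ Z ∪ Tc K s := by
    intro p hp hpZ
    rw [Finset.mem_union]
    rintro (h' | h')
    · exact hpZ h'
    · exact hp (top_mem_Tf.mp (Tc_subset h'))
  have htopF : ∀ j, j ∈ Tf K → j ∉ Tc K s → j ∉ Z ∪ Tc K s := by
    intro j hj hjTc
    rw [Finset.mem_union]
    rintro (h' | h')
    · exact hZP j h' (top_mem_Tf.mp hj)
    · exact hjTc h'
  set R := univ.filter (fun p => ¬ Topp K p ∧ p ∉ Z) with hRdef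
  have hmemR : ∀ p, p ∈ R ↔ (¬ Topp K p ∧ p ∉ Z) := by
    intro p; rw [hRdef, Finset.mem_filter]; simp
  have hcompl : ∀ a, a ∉ Z ∪ Tc K s → a ∈ R ∨ (a ∈ Tf K ∧ a ∉ Tc K s) := by
    intro a ha
    rw [Finset.mem_union] at ha
    push_neg at ha
    by_cases hatop : Topp K a
    · exact Or.inr ⟨top_mem_Tf.mpr hatop, ha.2⟩
    · exact Or.inl ((hmemR a).mpr ⟨hatop, ha.1⟩)
  rcases lt_or_ge 1 R.card with hR2 | hR1
  · -- Case A: two non-top elements outside Z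
    obtain ⟨p1, hp1, p2, hp2, hne⟩ := Finset.one_lt_card.mp hR2
    rw [hmemR] at hp1 hp2
    refine helperV hK hxy hne (hmemF p1 hp1.1 hp1.2) (hmemF p2 hp2.1 hp2.2) hFK ?_ ?_
    · have := hmax p1 hp1.1 hp1.2
      rwa [lv, Finset.insert_union] at this
    · have := hmax p2 hp2.1 hp2.2
      rwa [lv, Finset.insert_union] at this
  · -- at most one non-top element outside Z
    rcases Nat.le_one_iff_eq_zero_or_eq_one.mp hR1 with hR0 | hRone
    · -- Case C : R empty, every non-top element is in Z
      have hRe : R = ∅ := Finset.card_eq_zero.mp hR0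
      have hsm : s < (Tf K).card := by
        rcases lt_or_eq_of_le hs with h' | h'
        · exact h'
        · exfalso
          apply univ_not_mem hK hproper
          have : Z ∪ Tc K s = univ := by
            by_contra hne
            obtain ⟨a, -, ha⟩ := Finset.exists_of_ssubset
              (Finset.ssubset_iff_subset_ne.mpr ⟨Finset.subset_univ _, hne⟩)
            rcases hcompl a ha with h2 | h2
            · rw [hRe] at h2; exact absurd h2 (Finset.notMem_empty a)
            · rw [h', Tc_top] at h2; exact h2.2 h2.1
          rwa [this] at hFK
      obtain ⟨j1, hj1T, hj1Tc, hTc1⟩ := Tc_succ (K := K) hsm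
      have hnotlv : ¬ lv K Z (s+1) := htop.resolve_left (by omega)
      have hsm2 : s + 1 < (Tf K).card := by
        rcases lt_or_eq_of_le (Nat.succ_le_of_lt hsm) with h' | h'
        · exact h'
        · exfalso
          have hvet' : ∀ c : Fin n, univ.erase c ∉ K := hvet.resolve_left (by omega)
          apply hvet' j1
          have hTfeq : Tf K = Tc K (s+1) := by
            conv_lhs => rw [← Tc_top (K := K), ← h']
          have : Z ∪ Tc K s = univ.erase j1 := by
            apply Finset.Subset.antisymm
            · intro a ha
              refine Finset.mem_erase.mpr ⟨?_, mem_univ _⟩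
              rintro rfl
              exact htopF a hj1T hj1Tc ha
            · intro a ha
              rcases Finset.mem_erase.mp ha with ⟨haj, -⟩
              by_contra ha'
              rcases hcompl a ha' with h2 | h2
              · rw [hRe] at h2; exact absurd h2 (Finset.notMem_empty a)
              · have : a ∈ Tc K (s+1) := by rw [← hTfeq]; exact h2.1
                rw [hTc1] at this
                rcases Finset.mem_insert.mp this with rfl | h3
                · exact haj rfl
                · exact h2.2 h3
          rwa [this] at hFK
      obtain ⟨j2, hj2T, hj2Tc, hTc2⟩ := Tc_succ (K := K) hsm2
      have hj2Tcs : j2 ∉ Tc K s := fun h' => hj2Tc (Tc_mono (Nat.le_succ s) h')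
      have hne12 : j1 ≠ j2 := by
        rintro rfl
        exact hj2Tc (by rw [hTc1]; exact Finset.mem_insert_self _ _)
      have hi1 : insert j1 (Z ∪ Tc K s) ∉ K := by
        intro h'
        apply hnotlv
        rw [lv, hTc1, Finset.union_insert]
        exact h'
      have hi2 : insert j2 (Z ∪ Tc K s) ∉ K := by
        intro h'
        -- use Topp j2 to swap j2 back to j1
        have htopj2 : Topp K j2 := top_mem_Tf.mp hj2T
        have hj2mem : j2 ∈ insert j2 (Z ∪ Tc K s) := Finset.mem_insert_self _ _
        have hj1mem : j1 ∉ insert j2 (Z ∪ Tc K s) := by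
          rw [Finset.mem_insert]
          rintro (rfl | h'')
          · exact hne12 rfl
          · exact htopF j1 hj1T hj1Tc h''
        have := htopj2 _ h' hj2mem j1 hj1mem
        rw [Finset.erase_insert (htopF j2 hj2T hj2Tcs)] at this
        exact hi1 this
      exact helperV hK hxy (Ne.symm hne12) (htopF j2 hj2T hj2Tcs) (htopF j1 hj1T hj1Tc) hFK
        hi2 hi1
    · -- Case B : exactly one non-top element p0 outside Z
      obtain ⟨p0, hp0⟩ := Finset.card_eq_one.mp hRone
      have hp0R : p0 ∈ R := by rw [hp0]; exact Finset.mem_singleton_self _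
      rw [hmemR] at hp0R
      have hsm : s < (Tf K).card := by
        rcases lt_or_eq_of_le hs with h' | h'
        · exact h'
        · exfalso
          apply hp0R.1
          apply vetTop hK
          have hTfeq : Tc K s = Tf K := by rw [h', Tc_top]
          have : Z ∪ Tc K s = univ.erase p0 := by
            apply Finset.Subset.antisymm
            · intro a ha
              refine Finset.mem_erase.mpr ⟨?_, mem_univ _⟩
              rintro rfl
              exact hmemF a hp0R.1 hp0R.2 ha
            · intro a ha
              rcases Finset.mem_erase.mp ha with ⟨hap, -⟩
              by_contra ha'
              rcases hcompl a ha' with h2 | h2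
              · rw [hp0] at h2; exact hap (Finset.mem_singleton.mp h2)
              · rw [hTfeq] at h2; exact h2.2 h2.1
          rwa [this] at hFK
      obtain ⟨j1, hj1T, hj1Tc, hTc1⟩ := Tc_succ (K := K) hsm
      have hnotlv : ¬ lv K Z (s+1) := htop.resolve_left (by omega)
      have hne : p0 ≠ j1 := by
        rintro rfl
        exact hp0R.1 (top_mem_Tf.mp hj1T)
      have hi1 : insert p0 (Z ∪ Tc K s) ∉ K := by
        have := hmax p0 hp0R.1 hp0R.2
        rwa [lv, Finset.insert_union] at this
      have hi2 : insert j1 (Z ∪ Tc K s) ∉ K := by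
        intro h'
        apply hnotlv
        rw [lv, hTc1, Finset.union_insert]
        exact h'
      exact helperV hK hxy hne (hmemF p0 hp0R.1 hp0R.2) (htopF j1 hj1T hj1Tc) hFK hi1 hi2

open scoped Classical in
/-- Extraction of a tight nonface pair, with the Λ-configuration lower bound. -/
lemma Next (hK : IsComplex n K) (hghost : NoGhost n K)
    (hxy : IsNonStrictKSubmodular n K x y)
    {S : Finset (Fin n)} {t : ℕ} (hSP : ∀ i ∈ S, ¬ Topp K i) (ht : t ≤ (Tf K).card)
    (hnl : ¬ lv K S t) :
    ∃ Z μ, Z ⊆ S ∧ μ ≤ t ∧ ¬ lv K Z μ ∧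
      ∑ i, y i ≤ ∑ i ∈ Z, (x i + y i) + ∑ i ∈ Tc K μ, (x i + y i) := by
  have hex : ∃ s, ∃ Z ∈ S.powerset, ¬ lv K Z s := ⟨t, S, Finset.mem_powerset_self S, hnl⟩
  set μ := Nat.find hex with hμdef
  obtain ⟨Z0, hZ0mem, hZ0nl⟩ := Nat.find_spec hex
  have hμt : μ ≤ t := Nat.find_le ⟨S, Finset.mem_powerset_self S, hnl⟩
  have hμm : μ ≤ (Tf K).card := le_trans hμt ht
  have hprev : ∀ Z' ⊆ S, 1 ≤ μ → lv K Z' (μ - 1) := by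
    intro Z' hZ' h1
    by_contra h'
    exact Nat.find_min hex (show μ - 1 < μ by omega) ⟨Z', Finset.mem_powerset.mpr hZ', h'⟩
  set cand := (S.powerset).filter (fun Z => ¬ lv K Z μ) with hcand
  have hcane : cand.Nonempty := ⟨Z0, Finset.mem_filter.mpr ⟨hZ0mem, hZ0nl⟩⟩
  obtain ⟨Z, hZcand, hZmin⟩ := Finset.exists_min_image cand Finset.card hcane
  rw [hcand, Finset.mem_filter, Finset.mem_powerset] at hZcand
  obtain ⟨hZS, hZnl⟩ := hZcand
  have hZP : ∀ i ∈ Z, ¬ Topp K i := fun i hi => hSP i (hZS hi)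
  have hZTc : ∀ i ∈ Z, i ∉ Tc K μ := notTop_disj_Tc hZP
  have hdisj : Disjoint Z (Tc K μ) := Finset.disjoint_left.mpr hZTc
  have hsplit : ∑ i ∈ Z ∪ Tc K μ, (x i + y i)
      = ∑ i ∈ Z, (x i + y i) + ∑ i ∈ Tc K μ, (x i + y i) := Finset.sum_union hdisj
  have herase : ∀ z ∈ Z, lv K (Z.erase z) μ := by
    intro z hz
    by_contra h'
    have hmem : Z.erase z ∈ cand := Finset.mem_filter.mpr
      ⟨Finset.mem_powerset.mpr (le_trans (Finset.erase_subset _ _) hZS), h'⟩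
    have := hZmin _ hmem
    rw [Finset.card_erase_of_mem hz] at this
    have hpos : 0 < Z.card := Finset.card_pos.mpr ⟨z, hz⟩
    omega
  refine ⟨Z, μ, hZS, hμt, hZnl, ?_⟩
  rw [← hsplit]
  rcases Nat.lt_or_ge 1 Z.card with hc2 | hc1
  · -- |Z| ≥ 2
    obtain ⟨c1, hc1Z, c2, hc2Z, hne⟩ := Finset.one_lt_card.mp hc2
    have hid1 : insert c1 (((Z.erase c1).erase c2) ∪ Tc K μ) = (Z.erase c2) ∪ Tc K μ := by
      rw [← Finset.insert_union, Finset.erase_right_comm,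
        Finset.insert_erase (Finset.mem_erase.mpr ⟨hne, hc1Z⟩)]
    have hid2 : insert c2 (((Z.erase c1).erase c2) ∪ Tc K μ) = (Z.erase c1) ∪ Tc K μ := by
      rw [← Finset.insert_union,
        Finset.insert_erase (Finset.mem_erase.mpr ⟨Ne.symm hne, hc2Z⟩)]
    have hidC : insert c1 (insert c2 (((Z.erase c1).erase c2) ∪ Tc K μ)) = Z ∪ Tc K μ := by
      rw [hid2, ← Finset.insert_union, Finset.insert_erase hc1Z]
    have hkey := helperL hK hxy (x := x) (y := y) hne
      (show c1 ∉ ((Z.erase c1).erase c2) ∪ Tc K μ by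
        rw [Finset.mem_union]
        rintro (h' | h')
        · exact Finset.notMem_erase c1 _ (Finset.erase_right_comm (a := c1) ▸ h')
        · exact hZTc c1 hc1Z h')
      (show c2 ∉ ((Z.erase c1).erase c2) ∪ Tc K μ by
        rw [Finset.mem_union]
        rintro (h' | h')
        · exact Finset.notMem_erase c2 _ h'
        · exact hZTc c2 hc2Z h')
      (hK.2 _ _ (Finset.union_subset_union (Finset.erase_subset _ _) (le_refl _))
        (herase c1 hc1Z))
      (by rw [hid1]; exact herase c2 hc2Z)
      (by rw [hid2]; exact herase c1 hc1Z)
      (by rw [hidC]; exact hZnl)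
    rwa [hidC] at hkey
  · -- |Z| ≤ 1
    have hμ1 : 1 ≤ μ := by
      by_contra h'
      have hμ0 : μ = 0 := by omega
      apply hZnl
      rw [lv, hμ0, Tc_zero, Finset.union_empty]
      rcases Nat.le_one_iff_eq_zero_or_eq_one.mp hc1 with h0 | h1
      · rw [Finset.card_eq_zero.mp h0]; exact hK.1
      · obtain ⟨p, hp⟩ := Finset.card_eq_one.mp h1
        rw [hp]; exact hghost p
    rcases Nat.le_one_iff_eq_zero_or_eq_one.mp hc1 with h0 | h1
    · -- Z = ∅ : the chain set T_μ itself is a nonface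
      have hZe : Z = ∅ := Finset.card_eq_zero.mp h0
      subst hZe
      have hTcnl : Tc K μ ∉ K := by
        have := hZnl; rwa [lv, Finset.empty_union] at this
      have hTcpr : Tc K (μ - 1) ∈ K := by
        have := hprev ∅ (Finset.empty_subset S) hμ1
        rwa [lv, Finset.empty_union] at this
      have hμ2 : 2 ≤ μ := by
        by_contra h'
        have hμe : μ = 1 := by omega
        obtain ⟨j, hjT, hjTc, hTc1⟩ := Tc_succ (K := K) (show 0 < (Tf K).card by omega)
        apply hTcnl
        rw [hμe, hTc1, Tc_zero]
        simpa using hghost j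
      obtain ⟨j1, hj1T, hj1Tc, hTc1⟩ := Tc_succ (K := K) (show μ - 2 < (Tf K).card by omega)
      obtain ⟨j2, hj2T, hj2Tc, hTc2⟩ := Tc_succ (K := K) (show μ - 1 < (Tf K).card by omega)
      have he1 : μ - 2 + 1 = μ - 1 := by omega
      have he2 : μ - 1 + 1 = μ := by omega
      rw [he1] at hTc1
      rw [he2] at hTc2
      have hne : j2 ≠ j1 := by
        rintro rfl
        exact hj2Tc (by rw [hTc1]; exact Finset.mem_insert_self _ _)
      have hj2Tc2 : j2 ∉ Tc K (μ - 2) := fun h' => hj2Tc (Tc_mono (by omega) h')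
      have hkey := helperL hK hxy (x := x) (y := y) hne hj2Tc2 hj1Tc
        (hK.2 _ _ (Tc_mono (show μ - 2 ≤ μ - 1 by omega)) hTcpr)
        (by
          -- insert j2 (Tc (μ-2)) ∈ K via the Topp property of j1
          have htopj1 : Topp K j1 := top_mem_Tf.mp hj1T
          have hj1mem : j1 ∈ Tc K (μ - 1) := by rw [hTc1]; exact Finset.mem_insert_self _ _
          have hj2mem : j2 ∉ Tc K (μ - 1) := hj2Tc
          have := htopj1 _ hTcpr hj1mem j2 hj2mem
          rwa [hTc1, Finset.erase_insert hj1Tc] at this)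
        (by rw [← hTc1]; exact hTcpr)
        (by rw [← hTc1, ← hTc2]; exact hTcnl)
      rw [← hTc1, ← hTc2] at hkey
      simpa using hkey
    · -- Z = {p}
      obtain ⟨p, hp⟩ := Finset.card_eq_one.mp h1
      subst hp
      have hpP : ¬ Topp K p := hZP p (Finset.mem_singleton_self p)
      have hlv0 : lv K ∅ μ := by
        by_contra h'
        have hmem : (∅ : Finset (Fin n)) ∈ cand := Finset.mem_filter.mpr
          ⟨Finset.mem_powerset.mpr (Finset.empty_subset S), h'⟩
        have := hZmin _ hmem
        simp at this
      have hTcK : Tc K μ ∈ K := by rwa [lv, Finset.empty_union] at hlv0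
      have hlvp : lv K {p} (μ - 1) := hprev {p} hZS hμ1
      obtain ⟨j, hjT, hjTc, hTcj⟩ := Tc_succ (K := K) (show μ - 1 < (Tf K).card by omega)
      have he : μ - 1 + 1 = μ := by omega
      rw [he] at hTcj
      have hne : p ≠ j := by
        rintro rfl
        exact hpP (top_mem_Tf.mp hjT)
      have hpTc1 : p ∉ Tc K (μ - 1) := fun h' => hpP (top_mem_Tf.mp (Tc_subset h'))
      have hkey := helperL hK hxy (x := x) (y := y) hne hpTc1 hjTc
        (hK.2 _ _ (Tc_mono (show μ - 1 ≤ μ by omega)) hTcK)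
        (by
          have := hlvp
          rw [lv, ← Finset.insert_eq] at this
          exact this)
        (by rw [← hTcj]; exact hTcK)
        (by
          rw [← hTcj]
          intro h'
          apply hZnl
          rw [lv, ← Finset.insert_eq]
          exact h')
      rw [← hTcj] at hkey
      rwa [show ({p} : Finset (Fin n)) ∪ Tc K μ = insert p (Tc K μ) from
        (Finset.insert_eq p (Tc K μ)).symm]

lemma sum_u_mono (hK : IsComplex n K) (hxy : IsNonStrictKSubmodular n K x y)
    {A B : Finset (Fin n)} (hAB : A ⊆ B) (hBP : ∀ i ∈ B, ¬ Topp K i) :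
    ∑ i ∈ A, (x i + y i) ≤ ∑ i ∈ B, (x i + y i) :=
  Finset.sum_le_sum_of_subset_of_nonneg hAB (fun i hi _ => by
    have := posP hK hxy (hBP i hi); linarith)

lemma sum_u_nonneg (hK : IsComplex n K) (hxy : IsNonStrictKSubmodular n K x y)
    {A : Finset (Fin n)} (hAP : ∀ i ∈ A, ¬ Topp K i) :
    0 ≤ ∑ i ∈ A, (x i + y i) :=
  Finset.sum_nonneg (fun i hi => by have := posP hK hxy (hAP i hi); linarith)

open scoped Classical in
lemma maxext (hK : IsComplex n K) :
    ∀ (k : ℕ) (S : Finset (Fin n)), (∀ i ∈ S, ¬ Topp K i) →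
    ((univ.filter (fun p => ¬ Topp K p)) \ S).card ≤ k → ∀ t, lv K S t →
    ∃ Z, S ⊆ Z ∧ (∀ i ∈ Z, ¬ Topp K i) ∧ lv K Z t ∧
      ∀ p, ¬ Topp K p → p ∉ Z → ¬ lv K (insert p Z) t := by
  intro k
  induction k with
  | zero =>
    intro S hS hc t hlv
    refine ⟨S, subset_refl S, hS, hlv, ?_⟩
    intro p hp hpS _
    have : p ∈ (univ.filter (fun p => ¬ Topp K p)) \ S :=
      Finset.mem_sdiff.mpr ⟨Finset.mem_filter.mpr ⟨mem_univ p, hp⟩, hpS⟩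
    have h0 : ((univ.filter (fun p => ¬ Topp K p)) \ S) = ∅ :=
      Finset.card_eq_zero.mp (Nat.le_antisymm hc (Nat.zero_le _))
    rw [h0] at this
    exact Finset.notMem_empty p this
  | succ k ih =>
    intro S hS hc t hlv
    by_cases hstop : ∀ p, ¬ Topp K p → p ∉ S → ¬ lv K (insert p S) t
    · exact ⟨S, subset_refl S, hS, hlv, hstop⟩
    · push_neg at hstop
      obtain ⟨p, hp, hpS, hplv⟩ := hstop
      have hmem : p ∈ (univ.filter (fun q => ¬ Topp K q)) \ S :=
        Finset.mem_sdiff.mpr ⟨Finset.mem_filter.mpr ⟨mem_univ p, hp⟩, hpS⟩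
      have hc' : ((univ.filter (fun q => ¬ Topp K q)) \ insert p S).card ≤ k := by
        have hsub : (univ.filter (fun q => ¬ Topp K q)) \ insert p S
            ⊆ ((univ.filter (fun q => ¬ Topp K q)) \ S).erase p := by
          intro a ha
          rw [Finset.mem_sdiff, Finset.mem_insert] at ha
          push_neg at ha
          exact Finset.mem_erase.mpr ⟨ha.2.1, Finset.mem_sdiff.mpr ⟨ha.1, ha.2.2⟩⟩
        calc ((univ.filter (fun q => ¬ Topp K q)) \ insert p S).card
            ≤ (((univ.filter (fun q => ¬ Topp K q)) \ S).erase p).card :=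
              Finset.card_le_card hsub
          _ = ((univ.filter (fun q => ¬ Topp K q)) \ S).card - 1 :=
              Finset.card_erase_of_mem hmem
          _ ≤ k := by
              have : 0 < ((univ.filter (fun q => ¬ Topp K q)) \ S).card :=
                Finset.card_pos.mpr ⟨p, hmem⟩
              omega
      have hS' : ∀ i ∈ insert p S, ¬ Topp K i := by
        intro i hi
        rcases Finset.mem_insert.mp hi with rfl | hi
        · exact hp
        · exact hS i hi
      obtain ⟨Z, hSZ, hZP, hZlv, hZmax⟩ := ih (insert p S) hS' hc' t hplv
      exact ⟨Z, le_trans (Finset.subset_insert p S) hSZ, hZP, hZlv, hZmax⟩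

open scoped Classical in
lemma Fext (hK : IsComplex n K) (hproper : K ≠ Set.univ)
    (hxy : IsNonStrictKSubmodular n K x y)
    {S : Finset (Fin n)} {t : ℕ} (hSP : ∀ i ∈ S, ¬ Topp K i) (ht : t ≤ (Tf K).card)
    (hlv : lv K S t)
    (hvet : (∀ c : Fin n, univ.erase c ∉ K) ∨ t = (Tf K).card) :
    ∃ Z lam, S ⊆ Z ∧ (∀ i ∈ Z, ¬ Topp K i) ∧ t ≤ lam ∧ lam ≤ (Tf K).card ∧ lv K Z lam ∧
      ∑ i ∈ Z, (x i + y i) + ∑ i ∈ Tc K lam, (x i + y i) ≤ ∑ i, y i := by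
  obtain ⟨Z, hSZ, hZP, hZlv, hZmax⟩ := maxext hK _ S hSP le_rfl t hlv
  set lam := Nat.findGreatest (fun s => lv K Z s) (Tf K).card with hlamdef
  have hlamm : lam ≤ (Tf K).card := Nat.findGreatest_le _
  have htlam : t ≤ lam := Nat.le_findGreatest ht hZlv
  have hlvlam : lv K Z lam := Nat.findGreatest_spec ht hZlv
  have hgt : lam = (Tf K).card ∨ ¬ lv K Z (lam + 1) := by
    rcases eq_or_lt_of_le hlamm with h' | h'
    · exact Or.inl h'
    · exact Or.inr (Nat.findGreatest_is_greatest (Nat.lt_succ_self lam) h')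
  have hmax' : ∀ p, ¬ Topp K p → p ∉ Z → ¬ lv K (insert p Z) lam := by
    intro p hp hpZ h'
    exact hZmax p hp hpZ (lv_mono hK (subset_refl _) htlam h')
  have hvet' : lam = (Tf K).card ∨ ∀ c : Fin n, univ.erase c ∉ K := by
    rcases hvet with h' | h'
    · exact Or.inr h'
    · exact Or.inl (le_antisymm hlamm (h' ▸ htlam))
  exact ⟨Z, lam, hSZ, hZP, htlam, hlamm,  hlvlam,
    Vstar hK hproper hxy hlamm hZP hlvlam hmax' hgt hvet'⟩

open scoped Classical in
lemma core (hK : IsComplex n K) (hproper : K ≠ Set.univ) (hghost : NoGhost n K)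
    (hxy : IsNonStrictKSubmodular n K x y)
    (hvet : ∀ c : Fin n, univ.erase c ∉ K) :
    ∀ (k : ℕ) (Z : Finset (Fin n)), (∀ i ∈ Z, ¬ Topp K i) →
    ((univ.filter (fun p => ¬ Topp K p)) \ Z).card ≤ k →
    ∀ lam mu, lam ≤ (Tf K).card → mu ≤ lam → lv K Z lam →
    ∀ Z'', (∀ i ∈ Z'', ¬ Topp K i) → ¬ lv K Z'' mu →
    (∑ i ∈ Z, (x i + y i) ≤ ∑ i ∈ Z'', (x i + y i)) ∧
      (mu < lam → ∑ i ∈ Z, (x i + y i) < ∑ i ∈ Z'', (x i + y i)) := by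
  intro k
  induction k using Nat.strong_induction_on with
  | _ k ih =>
    intro Z hZP hc lam mu hlamm hmulam hlv Z'' hZ''P hZ''nl
    have hZ''Pf : Z'' ⊆ univ.filter (fun p => ¬ Topp K p) := by
      intro i hi; exact Finset.mem_filter.mpr ⟨mem_univ i, hZ''P i hi⟩
    rcases lt_or_eq_of_le hmulam with hlt | heq
    · -- mu < lam : climb
      by_cases hPfZ : (univ.filter (fun p => ¬ Topp K p)) ⊆ Z
      · exfalso
        exact hZ''nl (lv_mono hK (le_trans hZ''Pf hPfZ) (le_of_lt hlt) hlv)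
      · obtain ⟨p, hpPf, hpZ⟩ := Finset.not_subset.mp hPfZ
        have hp : ¬ Topp K p := (Finset.mem_filter.mp hpPf).2
        have hlam1 : lam - 1 + 1 = lam := by omega
        have hstep : lv K (insert p Z) (lam - 1) := by
          apply lv_step hK (by omega) hZP _ hpZ hp
          rw [hlam1]; exact hlv
        have hmem : p ∈ (univ.filter (fun q => ¬ Topp K q)) \ Z :=
          Finset.mem_sdiff.mpr ⟨hpPf, hpZ⟩
        have hk1 : ((univ.filter (fun q => ¬ Topp K q)) \ insert p Z).card < k := by
          have hsub : (univ.filter (fun q => ¬ Topp K q)) \ insert p Z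
              ⊆ ((univ.filter (fun q => ¬ Topp K q)) \ Z).erase p := by
            intro a ha
            rw [Finset.mem_sdiff, Finset.mem_insert] at ha
            push_neg at ha
            exact Finset.mem_erase.mpr ⟨ha.2.1, Finset.mem_sdiff.mpr ⟨ha.1, ha.2.2⟩⟩
          have h1 := Finset.card_le_card hsub
          rw [Finset.card_erase_of_mem hmem] at h1
          have : 0 < ((univ.filter (fun q => ¬ Topp K q)) \ Z).card :=
            Finset.card_pos.mpr ⟨p, hmem⟩
          omega
        have hZ'P : ∀ i ∈ insert p Z, ¬ Topp K i := by
          intro i hi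
          rcases Finset.mem_insert.mp hi with rfl | hi
          · exact hp
          · exact hZP i hi
        have hres := ih _ hk1 (insert p Z) hZ'P le_rfl (lam - 1) mu (by omega) (by omega)
          hstep Z'' hZ''P hZ''nl
        have hpos := posP hK hxy hp
        have hins : ∑ i ∈ insert p Z, (x i + y i) = (x p + y p) + ∑ i ∈ Z, (x i + y i) :=
          Finset.sum_insert hpZ
        constructor
        · linarith [hres.1]
        · intro _; linarith [hres.1]
    · -- mu = lam
      subst heq
      obtain ⟨Zs, lams, hZZs, hZsP, hlamle, hlamsm, hlvs, hub⟩ :=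
        Fext hK hproper hxy hZP hlamm hlv (Or.inl hvet)
      obtain ⟨Zm, mus, hZmsub, hmusle, hZmnl, hlb⟩ := Next hK hghost hxy hZ''P hlamm hZ''nl
      have hZmP : ∀ i ∈ Zm, ¬ Topp K i := fun i hi => hZ''P i (hZmsub hi)
      have hord : mus ≤ lams := le_trans hmusle hlamle
      have h1 : ∑ i ∈ Z, (x i + y i) ≤ ∑ i ∈ Zs, (x i + y i) := sum_u_mono hK hxy hZZs hZsP
      have h4 : ∑ i ∈ Zm, (x i + y i) ≤ ∑ i ∈ Z'', (x i + y i) := sum_u_mono hK hxy hZmsub hZ''P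
      rcases eq_or_lt_of_le hord with heq2 | hlt2
      · -- same tight level: the chain sums cancel
        subst heq2
        refine ⟨by linarith, fun h => absurd h (lt_irrefl _)⟩
      · -- strictly above: climb from Zs down to level mus
        by_cases hPfZs : (univ.filter (fun p => ¬ Topp K p)) ⊆ Zs
        · exfalso
          have : Zm ⊆ Zs := le_trans (fun i hi =>
            Finset.mem_filter.mpr ⟨mem_univ i, hZmP i hi⟩) hPfZs
          exact hZmnl (lv_mono hK this (le_of_lt hlt2) hlvs)
        · obtain ⟨p, hpPf, hpZs⟩ := Finset.not_subset.mp hPfZs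
          have hp : ¬ Topp K p := (Finset.mem_filter.mp hpPf).2
          have hlam1 : lams - 1 + 1 = lams := by omega
          have hstep : lv K (insert p Zs) (lams - 1) := by
            apply lv_step hK (by omega) hZsP _ hpZs hp
            rw [hlam1]; exact hlvs
          have hpZ : p ∉ Z := fun h' => hpZs (hZZs h')
          have hmem : p ∈ (univ.filter (fun q => ¬ Topp K q)) \ Z :=
            Finset.mem_sdiff.mpr ⟨hpPf, hpZ⟩
          have hk1 : ((univ.filter (fun q => ¬ Topp K q)) \ insert p Zs).card < k := by
            have hsub : (univ.filter (fun q => ¬ Topp K q)) \ insert p Zs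
                ⊆ ((univ.filter (fun q => ¬ Topp K q)) \ Z).erase p := by
              intro a ha
              rw [Finset.mem_sdiff, Finset.mem_insert] at ha
              push_neg at ha
              exact Finset.mem_erase.mpr ⟨ha.2.1, Finset.mem_sdiff.mpr
                ⟨ha.1, fun h' => ha.2.2 (hZZs h')⟩⟩
            have h1 := Finset.card_le_card hsub
            rw [Finset.card_erase_of_mem hmem] at h1
            have : 0 < ((univ.filter (fun q => ¬ Topp K q)) \ Z).card :=
              Finset.card_pos.mpr ⟨p, hmem⟩
            omega
          have hZ'P : ∀ i ∈ insert p Zs, ¬ Topp K i := by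
            intro i hi
            rcases Finset.mem_insert.mp hi with rfl | hi
            · exact hp
            · exact hZsP i hi
          have hres := ih _ hk1 (insert p Zs) hZ'P le_rfl (lams - 1) mus (by omega)
            (by omega) hstep Zm hZmP hZmnl
          have hpos := posP hK hxy hp
          have hins : ∑ i ∈ insert p Zs, (x i + y i) = (x p + y p) + ∑ i ∈ Zs, (x i + y i) :=
            Finset.sum_insert hpZs
          refine ⟨by linarith [hres.1], fun h => absurd h (lt_irrefl _)⟩

open scoped Classical in
lemma sumTc {a b : ℝ} (hconstx : ∀ i, Topp K i → x i = a) (hconsty : ∀ i, Topp K i → y i = b)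
    {s : ℕ} (hs : s ≤ (Tf K).card) :
    ∑ i ∈ Tc K s, (x i + y i) = (s : ℝ) * (a + b) := by
  have : ∀ i ∈ Tc K s, x i + y i = a + b := by
    intro i hi
    have htop : Topp K i := top_mem_Tf.mp (Tc_subset hi)
    rw [hconstx i htop, hconsty i htop]
  rw [Finset.sum_congr rfl this, Finset.sum_const, Tc_card hs, nsmul_eq_mul]

open scoped Classical in
lemma assembleNoVet (hK : IsComplex n K) (hproper : K ≠ Set.univ) (hghost : NoGhost n K)
    (hxy : IsNonStrictKSubmodular n K x y) {a b : ℝ}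
    (hxT : ∀ i, Topp K i → x i = a) (hyT : ∀ i, Topp K i → y i = b)
    (hvet : ∀ c : Fin n, univ.erase c ∉ K) :
    ∃ (w : Fin n → ℝ) (q : ℝ), RoughlyWeighted n K w q := by
  set m := (Tf K).card with hm
  set SY : ℝ := ∑ i, y i with hSY
  set γ : ℝ := a + b with hγ
  set Pf : Finset (Fin n) := univ.filter (fun p => ¬ Topp K p) with hPf
  set FF : Finset (Finset (Fin n) × ℕ) :=
    (Pf.powerset ×ˢ Finset.range (m+1)).filter
      (fun Zs => lv K Zs.1 Zs.2 ∧ ∑ i ∈ Zs.1, (x i + y i) + (Zs.2 : ℝ) * γ ≤ SY) with hFF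
  set NN : Finset (Finset (Fin n) × ℕ) :=
    (Pf.powerset ×ˢ Finset.range (m+1)).filter
      (fun Zs => ¬ lv K Zs.1 Zs.2 ∧ SY ≤ ∑ i ∈ Zs.1, (x i + y i) + (Zs.2 : ℝ) * γ) with hNN
  have hFFmem : ∀ Zs ∈ FF, (∀ i ∈ Zs.1, ¬ Topp K i) ∧ Zs.2 ≤ m ∧ lv K Zs.1 Zs.2 ∧
      ∑ i ∈ Zs.1, (x i + y i) + (Zs.2 : ℝ) * γ ≤ SY := by
    intro Zs hZs
    rw [hFF, Finset.mem_filter, Finset.mem_product, Finset.mem_powerset, Finset.mem_range] at hZs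
    refine ⟨fun i hi => ?_, by omega, hZs.2.1, hZs.2.2⟩
    have := hZs.1.1 hi
    rw [hPf, Finset.mem_filter] at this
    exact this.2
  have hNNmem : ∀ Zs ∈ NN, (∀ i ∈ Zs.1, ¬ Topp K i) ∧ Zs.2 ≤ m ∧ ¬ lv K Zs.1 Zs.2 ∧
      SY ≤ ∑ i ∈ Zs.1, (x i + y i) + (Zs.2 : ℝ) * γ := by
    intro Zs hZs
    rw [hNN, Finset.mem_filter, Finset.mem_product, Finset.mem_powerset, Finset.mem_range] at hZs
    refine ⟨fun i hi => ?_, by omega, hZs.2.1, hZs.2.2⟩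
    have := hZs.1.1 hi
    rw [hPf, Finset.mem_filter] at this
    exact this.2
  -- decomposition of arbitrary sets
  have hdecomp : ∀ A : Finset (Fin n),
      A.filter (fun i => ¬ Topp K i) ∪ A.filter (fun i => Topp K i) = A := by
    intro A
    rw [Finset.union_comm]
    exact Finset.filter_union_filter_not_eq _ A
  have hdisjA : ∀ A : Finset (Fin n),
      Disjoint (A.filter (fun i => ¬ Topp K i)) (A.filter (fun i => Topp K i)) := by
    intro A
    apply Finset.disjoint_left.mpr
    intro i hi1 hi2
    exact (Finset.mem_filter.mp hi1).2 (Finset.mem_filter.mp hi2).2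
  have hATf : ∀ A : Finset (Fin n), A.filter (fun i => Topp K i) ⊆ Tf K := by
    intro A i hi
    exact top_mem_Tf.mpr (Finset.mem_filter.mp hi).2
  have hAcard : ∀ A : Finset (Fin n), (A.filter (fun i => Topp K i)).card ≤ m := by
    intro A
    rw [hm]
    exact Finset.card_le_card (hATf A)
  -- face cover
  have hFace : ∀ A ∈ K, ∃ Zs ∈ FF,
      ∑ i ∈ A.filter (fun i => ¬ Topp K i), (x i + y i) ≤ ∑ i ∈ Zs.1, (x i + y i) ∧
      (A.filter (fun i => Topp K i)).card ≤ Zs.2 := by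
    intro A hA
    have hAPnt : ∀ i ∈ A.filter (fun i => ¬ Topp K i), ¬ Topp K i :=
      fun i hi => (Finset.mem_filter.mp hi).2
    have hlvA : lv K (A.filter (fun i => ¬ Topp K i)) (A.filter (fun i => Topp K i)).card := by
      apply exchange_to_lv hK hAPnt (hATf A)
      rw [hdecomp A]; exact hA
    obtain ⟨Z, lam, hAZ, hZP, hcl, hlm, hlvZ, hub⟩ :=
      Fext hK hproper hxy hAPnt (hAcard A) hlvA (Or.inl hvet)
    rw [sumTc hxT hyT hlm] at hub
    refine ⟨(Z, lam), ?_, sum_u_mono hK hxy hAZ hZP, hcl⟩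
    rw [hFF, Finset.mem_filter, Finset.mem_product, Finset.mem_powerset, Finset.mem_range]
    refine ⟨⟨fun i hi => ?_, by omega⟩, hlvZ, hub⟩
    rw [hPf, Finset.mem_filter]
    exact ⟨mem_univ i, hZP i hi⟩
  -- nonface cover
  have hNon : ∀ B : Finset (Fin n), B ∉ K → ∃ Zs ∈ NN,
      ∑ i ∈ Zs.1, (x i + y i) ≤ ∑ i ∈ B.filter (fun i => ¬ Topp K i), (x i + y i) ∧
      Zs.2 ≤ (B.filter (fun i => Topp K i)).card := by
    intro B hB
    have hBPnt : ∀ i ∈ B.filter (fun i => ¬ Topp K i), ¬ Topp K i :=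
      fun i hi => (Finset.mem_filter.mp hi).2
    have hnlvB : ¬ lv K (B.filter (fun i => ¬ Topp K i)) (B.filter (fun i => Topp K i)).card := by
      intro h'
      apply hB
      rw [← hdecomp B]
      exact exchange_from_lv hK hBPnt (hATf B) h'
    obtain ⟨Z, mu, hZB, hmuc, hnlZ, hlb⟩ := Next hK hghost hxy hBPnt (hAcard B) hnlvB
    rw [sumTc hxT hyT (le_trans hmuc (hAcard B))] at hlb
    refine ⟨(Z, mu), ?_, sum_u_mono hK hxy hZB hBPnt, hmuc⟩
    rw [hNN, Finset.mem_filter, Finset.mem_product, Finset.mem_powerset, Finset.mem_range]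
    have hmum : mu ≤ m := le_trans hmuc (hAcard B)
    refine ⟨⟨fun i hi => ?_, by omega⟩, hnlZ, hlb⟩
    rw [hPf, Finset.mem_filter]
    exact ⟨mem_univ i, hBPnt i (hZB hi)⟩
  -- the strict gaps
  have hgap : ∀ Zs ∈ FF, ∀ Zm ∈ NN, Zm.2 < Zs.2 →
      ∑ i ∈ Zs.1, (x i + y i) < ∑ i ∈ Zm.1, (x i + y i) := by
    intro Zs hZs Zm hZm hlt
    obtain ⟨hP1, hm1, hlv1, hub1⟩ := hFFmem Zs hZs
    obtain ⟨hP2, hm2, hlv2, hlb2⟩ := hNNmem Zm hZm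
    exact (core hK hproper hghost hxy hvet _ Zs.1 hP1 le_rfl Zs.2 Zm.2 hm1 (le_of_lt hlt)
      hlv1 Zm.1 hP2 hlv2).2 hlt
  have heqgap : ∀ Zs ∈ FF, ∀ Zm ∈ NN, Zm.2 = Zs.2 →
      ∑ i ∈ Zs.1, (x i + y i) ≤ ∑ i ∈ Zm.1, (x i + y i) := by
    intro Zs hZs Zm hZm heq2
    obtain ⟨hP1, hm1, hlv1, hub1⟩ := hFFmem Zs hZs
    obtain ⟨hP2, hm2, hlv2, hlb2⟩ := hNNmem Zm hZm
    exact (core hK hproper hghost hxy hvet _ Zs.1 hP1 le_rfl Zs.2 Zm.2 hm1 (le_of_eq heq2)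
      hlv1 Zm.1 hP2 hlv2).1
  -- definition of M
  set pairs := (FF ×ˢ NN).filter (fun pq => pq.2.2 < pq.1.2) with hpairs
  have hpairmem : ∀ pq ∈ pairs, pq.1 ∈ FF ∧ pq.2 ∈ NN ∧ pq.2.2 < pq.1.2 := by
    intro pq hpq
    rw [hpairs, Finset.mem_filter, Finset.mem_product] at hpq
    exact ⟨hpq.1.1, hpq.1.2, hpq.2⟩
  set gapf : (Finset (Fin n) × ℕ) × (Finset (Fin n) × ℕ) → ℝ :=
    fun pq => (∑ i ∈ pq.2.1, (x i + y i) - ∑ i ∈ pq.1.1, (x i + y i)) /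
      ((pq.1.2 : ℝ) - (pq.2.2 : ℝ)) with hgapf
  have hgapf_pos : ∀ pq ∈ pairs, 0 < gapf pq := by
    intro pq hpq
    obtain ⟨h1, h2, h3⟩ := hpairmem pq hpq
    have hnum := hgap _ h1 _ h2 h3
    have hden : (0:ℝ) < (pq.1.2 : ℝ) - (pq.2.2 : ℝ) := by
      have : (pq.2.2 : ℝ) < (pq.1.2 : ℝ) := by exact_mod_cast h3
      linarith
    exact div_pos (by linarith) hden
  have hgapf_ge : ∀ pq ∈ pairs, γ ≤ gapf pq := by
    intro pq hpq
    obtain ⟨h1, h2, h3⟩ := hpairmem pq hpq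
    obtain ⟨hP1, hm1, hlv1, hub1⟩ := hFFmem _ h1
    obtain ⟨hP2, hm2, hlv2, hlb2⟩ := hNNmem _ h2
    have hden : (0:ℝ) < (pq.1.2 : ℝ) - (pq.2.2 : ℝ) := by
      have : (pq.2.2 : ℝ) < (pq.1.2 : ℝ) := by exact_mod_cast h3
      linarith
    rw [hgapf, le_div_iff₀ hden]
    nlinarith [hub1, hlb2]
  obtain ⟨M, hM0, hMγ, hM3⟩ : ∃ M : ℝ, 0 < M ∧ γ ≤ M ∧
      ∀ pq ∈ pairs, ((pq.1.2 : ℝ) - (pq.2.2 : ℝ)) * M ≤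
        ∑ i ∈ pq.2.1, (x i + y i) - ∑ i ∈ pq.1.1, (x i + y i) := by
    by_cases hne : pairs.Nonempty
    · refine ⟨(pairs.image gapf).min' (hne.image _), ?_, ?_, ?_⟩
      · obtain ⟨pq0, hpq0, hval⟩ := Finset.mem_image.mp
          ((pairs.image gapf).min'_mem (hne.image _))
        rw [← hval]
        exact hgapf_pos _ hpq0
      · obtain ⟨pq0, hpq0, hval⟩ := Finset.mem_image.mp
          ((pairs.image gapf).min'_mem (hne.image _))
        rw [← hval]
        exact hgapf_ge _ hpq0
      · intro pq hpq
        have hle : (pairs.image gapf).min' (hne.image _) ≤ gapf pq :=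
          Finset.min'_le _ _ (Finset.mem_image_of_mem _ hpq)
        have hden : (0:ℝ) < (pq.1.2 : ℝ) - (pq.2.2 : ℝ) := by
          have : (pq.2.2 : ℝ) < (pq.1.2 : ℝ) := by exact_mod_cast (hpairmem pq hpq).2.2
          linarith
        rw [hgapf] at hle
        calc ((pq.1.2 : ℝ) - (pq.2.2 : ℝ)) * (pairs.image gapf).min' (hne.image _)
            ≤ ((pq.1.2 : ℝ) - (pq.2.2 : ℝ)) *
              ((∑ i ∈ pq.2.1, (x i + y i) - ∑ i ∈ pq.1.1, (x i + y i)) /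
                ((pq.1.2 : ℝ) - (pq.2.2 : ℝ))) :=
              mul_le_mul_of_nonneg_left hle (le_of_lt hden)
          _ = ∑ i ∈ pq.2.1, (x i + y i) - ∑ i ∈ pq.1.1, (x i + y i) := by
              field_simp
    · refine ⟨max γ 0 + 1, by positivity, by linarith [le_max_left γ 0], ?_⟩
      intro pq hpq
      exact absurd ⟨pq, hpq⟩ hne
  -- cross inequality
  have hcross : ∀ Zs ∈ FF, ∀ Zm ∈ NN,
      ∑ i ∈ Zs.1, (x i + y i) + (Zs.2 : ℝ) * M ≤ ∑ i ∈ Zm.1, (x i + y i) + (Zm.2 : ℝ) * M := by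
    intro Zs hZs Zm hZm
    rcases lt_trichotomy Zm.2 Zs.2 with hlt | heq2 | hgt
    · have := hM3 (Zs, Zm) (by
        rw [hpairs, Finset.mem_filter, Finset.mem_product]
        exact ⟨⟨hZs, hZm⟩, hlt⟩)
      simp only at this
      nlinarith [this]
    · have := heqgap Zs hZs Zm hZm heq2
      rw [heq2]
      linarith
    · obtain ⟨hP1, hm1, hlv1, hub1⟩ := hFFmem _ hZs
      obtain ⟨hP2, hm2, hlv2, hlb2⟩ := hNNmem _ hZm
      have hc : (0:ℝ) ≤ (Zm.2 : ℝ) - (Zs.2 : ℝ) := by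
        have : (Zs.2 : ℝ) ≤ (Zm.2 : ℝ) := by exact_mod_cast le_of_lt hgt
        linarith
      have hmul : ((Zm.2 : ℝ) - (Zs.2 : ℝ)) * γ ≤ ((Zm.2 : ℝ) - (Zs.2 : ℝ)) * M :=
        mul_le_mul_of_nonneg_left hMγ hc
      nlinarith [hub1, hlb2]
  -- FF is nonempty
  have hFFne : FF.Nonempty := by
    obtain ⟨Zs, hZs, -⟩ := hFace ∅ hK.1
    exact ⟨Zs, hZs⟩
  set q := (FF.image (fun Zs => ∑ i ∈ Zs.1, (x i + y i) + (Zs.2 : ℝ) * M)).max'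
    (hFFne.image _) with hq
  -- the weight function
  set w : Fin n → ℝ := fun i => if Topp K i then M else x i + y i with hw
  have hwpos : ∀ i, 0 < w i := by
    intro i
    rw [hw]
    by_cases h : Topp K i
    · simp [h, hM0]
    · simp only [h, if_false]
      have := posP hK hxy h
      linarith
  have hsumw : ∀ A : Finset (Fin n), ∑ i ∈ A, w i =
      ∑ i ∈ A.filter (fun i => ¬ Topp K i), (x i + y i) +
        ((A.filter (fun i => Topp K i)).card : ℝ) * M := by
    intro A
    have h1 : ∑ i ∈ A.filter (fun i => ¬ Topp K i), w i
        = ∑ i ∈ A.filter (fun i => ¬ Topp K i), (x i + y i) := by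
      apply Finset.sum_congr rfl
      intro i hi
      rw [hw]
      simp [(Finset.mem_filter.mp hi).2]
    have h2 : ∑ i ∈ A.filter (fun i => Topp K i), w i
        = ((A.filter (fun i => Topp K i)).card : ℝ) * M := by
      rw [show ∑ i ∈ A.filter (fun i => Topp K i), w i
          = ∑ _i ∈ A.filter (fun i => Topp K i), M from Finset.sum_congr rfl
            (fun i hi => by rw [hw]; simp [(Finset.mem_filter.mp hi).2]),
        Finset.sum_const, nsmul_eq_mul]
    conv_lhs => rw [← hdecomp A]
    rw [Finset.sum_union (hdisjA A), h1, h2]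
  -- face bound
  have hfaceb : ∀ A ∈ K, ∑ i ∈ A, w i ≤ q := by
    intro A hA
    obtain ⟨Zs, hZs, hle, hcard⟩ := hFace A hA
    rw [hsumw A]
    have h1 : ((A.filter (fun i => Topp K i)).card : ℝ) * M ≤ (Zs.2 : ℝ) * M := by
      apply mul_le_mul_of_nonneg_right _ (le_of_lt hM0)
      exact_mod_cast hcard
    have h2 : ∑ i ∈ Zs.1, (x i + y i) + (Zs.2 : ℝ) * M ≤ q := by
      rw [hq]
      exact Finset.le_max' _ _ (Finset.mem_image_of_mem (fun Zs => ∑ i ∈ Zs.1, (x i + y i) + (Zs.2 : ℝ) * M) hZs)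
    linarith
  -- nonface bound
  have hnonb : ∀ B : Finset (Fin n), B ∉ K → q ≤ ∑ i ∈ B, w i := by
    intro B hB
    obtain ⟨Zm, hZm, hle, hcard⟩ := hNon B hB
    rw [hsumw B]
    have h1 : (Zm.2 : ℝ) * M ≤ ((B.filter (fun i => Topp K i)).card : ℝ) * M := by
      apply mul_le_mul_of_nonneg_right _ (le_of_lt hM0)
      exact_mod_cast hcard
    have h2 : q ≤ ∑ i ∈ Zm.1, (x i + y i) + (Zm.2 : ℝ) * M := by
      rw [hq]
      apply Finset.max'_le
      intro v hv
      obtain ⟨Zs, hZs, hval⟩ := Finset.mem_image.mp hv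
      rw [← hval]
      exact hcross Zs hZs Zm hZm
    linarith
  -- q is positive
  have hn0 : (univ : Finset (Fin n)).Nonempty := by
    by_contra h'
    have : (univ : Finset (Fin n)) = ∅ := not_nonempty_iff_eq_empty.mp h'
    exact univ_not_mem hK hproper (this ▸ hK.1)
  obtain ⟨i0, -⟩ := hn0
  have hq0 : 0 < q := by
    have h1 : ∑ i ∈ {i0}, w i ≤ q := hfaceb {i0} (hghost i0)
    rw [Finset.sum_singleton] at h1
    linarith [hwpos i0]
  refine ⟨w, q, hwpos, hq0, ?_⟩
  intro X
  constructor
  · intro hlt hX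
    linarith [hfaceb X hX]
  · intro hlt
    by_contra hX
    linarith [hnonb X hX]

open scoped Classical in
lemma assembleVet (hK : IsComplex n K) (hproper : K ≠ Set.univ) (hghost : NoGhost n K)
    (hxy : IsNonStrictKSubmodular n K x y)
    (hvet : ∃ c : Fin n, univ.erase c ∈ K) :
    ∃ (w : Fin n → ℝ) (q : ℝ), RoughlyWeighted n K w q := by
  obtain ⟨c, hc⟩ := hvet
  have hctop : Topp K c := vetTop hK hc
  set m := (Tf K).card with hm
  have hm1 : 1 ≤ m := by
    rw [hm]
    exact Finset.card_pos.mpr ⟨c, top_mem_Tf.mpr hctop⟩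
  -- every element of Tf is a "vetoer": univ.erase j ∈ K
  have heraseK : ∀ j, Topp K j → univ.erase j ∈ K := by
    intro j hj
    by_cases hjc : j = c
    · rwa [hjc]
    · have hjF : j ∈ univ.erase c := Finset.mem_erase.mpr ⟨hjc, mem_univ j⟩
      have hcF : c ∉ univ.erase c := Finset.notMem_erase c univ
      have := hj _ hc hjF c hcF
      have hid : insert c ((univ.erase c).erase j) = univ.erase j := by
        ext a
        simp only [Finset.mem_insert, Finset.mem_erase, mem_univ, and_true]
        constructor
        · rintro (rfl | ⟨haj, hac⟩)
          · exact fun h => hjc h.symm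
          · exact haj
        · intro ha
          by_cases hac : a = c
          · exact Or.inl hac
          · exact Or.inr ⟨ha, hac⟩
      rwa [hid] at this
  -- all levels below m are full
  have hfull : ∀ S : Finset (Fin n), (∀ i ∈ S, ¬ Topp K i) → ∀ s, s < m → lv K S s := by
    intro S hS s hs
    obtain ⟨j, hjT, hjTc, -⟩ := Tc_succ (K := K) hs
    apply hK.2 _ _ _ (heraseK j (top_mem_Tf.mp hjT))
    intro a ha
    refine Finset.mem_erase.mpr ⟨?_, mem_univ a⟩
    rintro rfl
    rcases Finset.mem_union.mp ha with h' | h'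
    · exact hS a h' (top_mem_Tf.mp hjT)
    · exact hjTc h'
  set SY : ℝ := ∑ i, y i with hSY
  set Pf : Finset (Fin n) := univ.filter (fun p => ¬ Topp K p) with hPf
  set M : ℝ := ∑ i ∈ Pf, (x i + y i) + 1 with hM
  have hPfP : ∀ i ∈ Pf, ¬ Topp K i := by
    intro i hi
    rw [hPf, Finset.mem_filter] at hi
    exact hi.2
  have hM1 : 1 ≤ M := by
    rw [hM]
    linarith [sum_u_nonneg hK hxy hPfP]
  have hM0 : 0 < M := by linarith
  set D : ℝ := SY - ∑ i ∈ Tf K, (x i + y i) with hD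
  set q : ℝ := max D (-1) + (m : ℝ) * M with hq
  set w : Fin n → ℝ := fun i => if Topp K i then M else x i + y i with hw
  have hwpos : ∀ i, 0 < w i := by
    intro i
    rw [hw]
    by_cases h : Topp K i
    · simp [h, hM0]
    · simp only [h, if_false]
      have := posP hK hxy h
      linarith
  -- decomposition of sums
  have hdecomp : ∀ A : Finset (Fin n),
      A.filter (fun i => ¬ Topp K i) ∪ A.filter (fun i => Topp K i) = A := by
    intro A
    rw [Finset.union_comm]
    exact Finset.filter_union_filter_not_eq _ A
  have hdisjA : ∀ A : Finset (Fin n),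
      Disjoint (A.filter (fun i => ¬ Topp K i)) (A.filter (fun i => Topp K i)) := by
    intro A
    apply Finset.disjoint_left.mpr
    intro i hi1 hi2
    exact (Finset.mem_filter.mp hi1).2 (Finset.mem_filter.mp hi2).2
  have hATf : ∀ A : Finset (Fin n), A.filter (fun i => Topp K i) ⊆ Tf K := by
    intro A i hi
    exact top_mem_Tf.mpr (Finset.mem_filter.mp hi).2
  have hAcard : ∀ A : Finset (Fin n), (A.filter (fun i => Topp K i)).card ≤ m := by
    intro A
    rw [hm]
    exact Finset.card_le_card (hATf A)
  have hAPnt : ∀ A : Finset (Fin n), ∀ i ∈ A.filter (fun i => ¬ Topp K i), ¬ Topp K i :=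
    fun A i hi => (Finset.mem_filter.mp hi).2
  have hAPf : ∀ A : Finset (Fin n), A.filter (fun i => ¬ Topp K i) ⊆ Pf := by
    intro A i hi
    rw [hPf, Finset.mem_filter]
    exact ⟨mem_univ i, (Finset.mem_filter.mp hi).2⟩
  have hsumw : ∀ A : Finset (Fin n), ∑ i ∈ A, w i =
      ∑ i ∈ A.filter (fun i => ¬ Topp K i), (x i + y i) +
        ((A.filter (fun i => Topp K i)).card : ℝ) * M := by
    intro A
    have h1 : ∑ i ∈ A.filter (fun i => ¬ Topp K i), w i
        = ∑ i ∈ A.filter (fun i => ¬ Topp K i), (x i + y i) := by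
      apply Finset.sum_congr rfl
      intro i hi
      rw [hw]
      simp [(Finset.mem_filter.mp hi).2]
    have h2 : ∑ i ∈ A.filter (fun i => Topp K i), w i
        = ((A.filter (fun i => Topp K i)).card : ℝ) * M := by
      rw [show ∑ i ∈ A.filter (fun i => Topp K i), w i
          = ∑ _i ∈ A.filter (fun i => Topp K i), M from Finset.sum_congr rfl
            (fun i hi => by rw [hw]; simp [(Finset.mem_filter.mp hi).2]),
        Finset.sum_const, nsmul_eq_mul]
    conv_lhs => rw [← hdecomp A]
    rw [Finset.sum_union (hdisjA A), h1, h2]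
  -- face bound
  have hfaceb : ∀ A ∈ K, ∑ i ∈ A, w i ≤ q := by
    intro A hA
    rw [hsumw A]
    rcases lt_or_eq_of_le (hAcard A) with hlt | heq
    · -- fewer than m top elements
      have h1 : ∑ i ∈ A.filter (fun i => ¬ Topp K i), (x i + y i) ≤ M - 1 := by
        rw [hM]
        have := sum_u_mono hK hxy (hAPf A) hPfP
        linarith
      have h2 : ((A.filter (fun i => Topp K i)).card : ℝ) ≤ (m : ℝ) - 1 := by
        have : (A.filter (fun i => Topp K i)).card ≤ m - 1 := by omega
        have h3 : ((A.filter (fun i => Topp K i)).card : ℝ) ≤ ((m - 1 : ℕ) : ℝ) := by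
          exact_mod_cast this
        have h4 : ((m - 1 : ℕ) : ℝ) = (m : ℝ) - 1 := by
          have : (1:ℕ) ≤ m := hm1
          push_cast [this]
          ring
        linarith
      have h5 : ((A.filter (fun i => Topp K i)).card : ℝ) * M ≤ ((m : ℝ) - 1) * M :=
        mul_le_mul_of_nonneg_right h2 (le_of_lt hM0)
      rw [hq]
      have h6 : (-1 : ℝ) ≤ max D (-1) := le_max_right D (-1)
      nlinarith
    · -- exactly m top elements: use the level-m bound
      have hlvA : lv K (A.filter (fun i => ¬ Topp K i)) m := by
        rw [← heq]
        apply exchange_to_lv hK (hAPnt A) (hATf A)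
        rw [hdecomp A]; exact hA
      obtain ⟨Z, lam, hAZ, hZP, hcl, hlm, hlvZ, hub⟩ :=
        Fext hK hproper hxy (hAPnt A) le_rfl hlvA (Or.inr rfl)
      have hlameq : lam = m := le_antisymm hlm hcl
      rw [hlameq, Tc_top] at hub
      have h1 : ∑ i ∈ A.filter (fun i => ¬ Topp K i), (x i + y i) ≤ D := by
        have := sum_u_mono hK hxy hAZ hZP
        rw [hD]
        linarith
      rw [hq, ← heq]
      have h6 : D ≤ max D (-1) := le_max_left D (-1)
      linarith
  -- nonface bound
  have hnonb : ∀ B : Finset (Fin n), B ∉ K → q ≤ ∑ i ∈ B, w i := by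
    intro B hB
    rw [hsumw B]
    have hnlvB : ¬ lv K (B.filter (fun i => ¬ Topp K i)) (B.filter (fun i => Topp K i)).card := by
      intro h'
      apply hB
      rw [← hdecomp B]
      exact exchange_from_lv hK (hAPnt B) (hATf B) h'
    have hBm : (B.filter (fun i => Topp K i)).card = m := by
      rcases lt_or_eq_of_le (hAcard B) with hlt | heq
      · exact absurd (hfull _ (hAPnt B) _ hlt) hnlvB
      · exact heq
    rw [hBm] at hnlvB ⊢
    obtain ⟨Z, mu, hZB, hmuc, hnlZ, hlb⟩ := Next hK hghost hxy (hAPnt B) le_rfl hnlvB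
    have hZP : ∀ i ∈ Z, ¬ Topp K i := fun i hi => hAPnt B i (hZB hi)
    have hmueq : mu = m := by
      rcases lt_or_eq_of_le hmuc with hlt | heq
      · exact absurd (hfull Z hZP mu hlt) hnlZ
      · exact heq
    rw [hmueq, Tc_top] at hlb
    have h1 : D ≤ ∑ i ∈ B.filter (fun i => ¬ Topp K i), (x i + y i) := by
      have := sum_u_mono hK hxy hZB (hAPnt B)
      rw [hD]
      linarith
    have h2 : (0:ℝ) ≤ ∑ i ∈ B.filter (fun i => ¬ Topp K i), (x i + y i) :=
      sum_u_nonneg hK hxy (hAPnt B)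
    rw [hq]
    have h3 : max D (-1) ≤ ∑ i ∈ B.filter (fun i => ¬ Topp K i), (x i + y i) :=
      max_le h1 (by linarith)
    linarith
  -- conclusion
  have hn0 : (univ : Finset (Fin n)).Nonempty := by
    by_contra h'
    have : (univ : Finset (Fin n)) = ∅ := not_nonempty_iff_eq_empty.mp h'
    exact univ_not_mem hK hproper (this ▸ hK.1)
  obtain ⟨i0, -⟩ := hn0
  have hq0 : 0 < q := by
    have h1 : ∑ i ∈ {i0}, w i ≤ q := hfaceb {i0} (hghost i0)
    rw [Finset.sum_singleton] at h1
    linarith [hwpos i0]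
  refine ⟨w, q, hwpos, hq0, ?_⟩
  intro X
  constructor
  · intro hlt hX
    linarith [hfaceb X hX]
  · intro hlt
    by_contra hX
    linarith [hnonb X hX]

lemma image_swap_mem (hK : IsComplex n K) {i j : Fin n} (hi : Topp K i) (hj : Topp K j)
    {S : Finset (Fin n)} (hS : S ∈ K) : S.image (Equiv.swap i j) ∈ K := by
  classical
  have hmem : ∀ (T : Finset (Fin n)) (a : Fin n),
      a ∈ T.image (Equiv.swap i j) ↔ Equiv.swap i j a ∈ T := by
    intro T a
    rw [Finset.mem_image]
    constructor
    · rintro ⟨b, hb, rfl⟩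
      rwa [Equiv.swap_apply_self]
    · intro h
      exact ⟨_, h, Equiv.swap_apply_self _ _ _⟩
  by_cases hij : i = j
  · subst hij
    have : S.image (Equiv.swap i i) = S := by
      ext a
      rw [hmem, Equiv.swap_self]
      rfl
    rwa [this]
  by_cases hiS : i ∈ S <;> by_cases hjS : j ∈ S
  · have : S.image (Equiv.swap i j) = S := by
      ext a
      rw [hmem, Equiv.swap_apply_def]
      split_ifs with h1 h2
      · subst h1; constructor <;> intro <;> assumption
      · subst h2; constructor <;> intro <;> assumption
      · rfl
    rwa [this]
  · have : S.image (Equiv.swap i j) = insert j (S.erase i) := by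
      ext a
      rw [hmem, Equiv.swap_apply_def, Finset.mem_insert, Finset.mem_erase]
      split_ifs with h1 h2
      · subst h1
        constructor
        · intro h; exact absurd h hjS
        · rintro (h | ⟨hne, h⟩)
          · exact absurd h hij
          · exact absurd rfl hne
      · subst h2
        constructor
        · intro _; exact Or.inl rfl
        · intro _; exact hiS
      · constructor
        · intro h; exact Or.inr ⟨h1, h⟩
        · rintro (h | ⟨hne, h⟩)
          · exact absurd h h2
          · exact h
    rw [this]
    exact hi S hS hiS j (fun h => hjS h)
  · have : S.image (Equiv.swap i j) = insert i (S.erase j) := by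
      ext a
      rw [hmem, Equiv.swap_apply_def, Finset.mem_insert, Finset.mem_erase]
      split_ifs with h1 h2
      · subst h1
        constructor
        · intro _; exact Or.inl rfl
        · intro _; exact hjS
      · subst h2
        constructor
        · intro h; exact absurd h hiS
        · rintro (h | ⟨hne, h⟩)
          · exact absurd h (fun hh => hij hh.symm)
          · exact absurd rfl hne
      · constructor
        · intro h; exact Or.inr ⟨h2, h⟩
        · rintro (h | ⟨hne, h⟩)
          · exact absurd h h1
          · exact h
    rw [this]
    exact hj S hS hjS i (fun h => hiS h)
  · have : S.image (Equiv.swap i j) = S := by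
      ext a
      rw [hmem, Equiv.swap_apply_def]
      split_ifs with h1 h2
      · subst h1
        constructor
        · intro h; exact absurd h hjS
        · intro h; exact absurd h hiS
      · subst h2
        constructor
        · intro h; exact absurd h hiS
        · intro h; exact absurd h hjS
      · rfl
    rwa [this]

lemma image_listprod_mem (hK : IsComplex n K) :
    ∀ (L : List (Equiv.Perm (Fin n))),
    (∀ σ ∈ L, ∀ S ∈ K, S.image ⇑σ ∈ K) → ∀ S ∈ K, S.image ⇑L.prod ∈ K := by
  intro L
  induction L with
  | nil =>
    intro _ S hS
    have : S.image ⇑(1 : Equiv.Perm (Fin n)) = S := by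
      ext a; simp
    simpa [this]
  | cons a L' ih =>
    intro hL S hS
    have h1 : S.image ⇑(a :: L').prod = (S.image ⇑L'.prod).image ⇑a := by
      rw [List.prod_cons, Finset.image_image]
      rfl
    rw [h1]
    exact hL a (List.mem_cons_self) _
      (ih (fun σ hσ => hL σ (List.mem_cons_of_mem a hσ)) S hS)

lemma zip_swap_struct :
    ∀ (l1 l2 : List (Fin n)), ∀ σ ∈ List.zipWith Equiv.swap l1 l2,
    ∃ a b, a ∈ l1 ∧ b ∈ l2 ∧ σ = Equiv.swap a b := by
  intro l1
  induction l1 with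
  | nil => intro l2 σ hσ; simp at hσ
  | cons a l1' ih =>
    intro l2 σ hσ
    cases l2 with
    | nil => simp at hσ
    | cons b l2' =>
      rw [List.zipWith_cons_cons, List.mem_cons] at hσ
      rcases hσ with rfl | hσ
      · exact ⟨a, b, List.mem_cons_self, List.mem_cons_self, rfl⟩
      · obtain ⟨a', b', ha', hb', rfl⟩ := ih l2' σ hσ
        exact ⟨a', b', List.mem_cons_of_mem a ha', List.mem_cons_of_mem b hb', rfl⟩

lemma mem_Tl_top {a : Fin n} (ha : a ∈ Tl K) : Topp K a := by
  rw [← List.mem_toFinset, Tl_toFinset] at ha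
  exact top_mem_Tf.mp ha

lemma formPerm_mem (hK : IsComplex n K) : ∀ S ∈ K, S.image ⇑((Tl K).formPerm) ∈ K := by
  apply image_listprod_mem hK
  intro σ hσ S hS
  obtain ⟨a, b, ha, hb, rfl⟩ := zip_swap_struct (Tl K) (Tl K).tail σ hσ
  exact image_swap_mem hK (mem_Tl_top ha) (mem_Tl_top (List.mem_of_mem_tail hb)) hS

lemma formPerm_inv_mem (hK : IsComplex n K) :
    ∀ S ∈ K, S.image ⇑((Tl K).formPerm)⁻¹ ∈ K := by
  have hrw : ((Tl K).formPerm)⁻¹ =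
      ((List.zipWith Equiv.swap (Tl K) (Tl K).tail).map (fun x => x⁻¹)).reverse.prod := by
    rw [← List.prod_inv_reverse]
    rfl
  rw [hrw]
  apply image_listprod_mem hK
  intro σ hσ S hS
  rw [List.mem_reverse, List.mem_map] at hσ
  obtain ⟨σ', hσ', rfl⟩ := hσ
  obtain ⟨a, b, ha, hb, rfl⟩ := zip_swap_struct (Tl K) (Tl K).tail σ' hσ'
  rw [Equiv.swap_inv]
  exact image_swap_mem hK (mem_Tl_top ha) (mem_Tl_top (List.mem_of_mem_tail hb)) hS

lemma formPerm_pow_mem (hK : IsComplex n K) (k : ℕ) :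
    ∀ S ∈ K, S.image ⇑(((Tl K).formPerm) ^ k) ∈ K := by
  induction k with
  | zero =>
    intro S hS
    have : S.image ⇑(((Tl K).formPerm) ^ 0) = S := by
      ext a; simp
    rwa [this]
  | succ k ih =>
    intro S hS
    have h1 : S.image ⇑(((Tl K).formPerm) ^ (k+1))
        = (S.image ⇑(((Tl K).formPerm))).image ⇑(((Tl K).formPerm) ^ k) := by
      rw [Finset.image_image, pow_succ, Equiv.Perm.coe_mul]
    rw [h1]
    exact ih _ (formPerm_mem hK S hS)

lemma formPerm_pow_inv_mem (hK : IsComplex n K) (k : ℕ) :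
    ∀ S ∈ K, S.image ⇑((((Tl K).formPerm) ^ k)⁻¹) ∈ K := by
  induction k with
  | zero =>
    intro S hS
    have : S.image ⇑((((Tl K).formPerm) ^ 0)⁻¹) = S := by
      ext a; simp
    rwa [this]
  | succ k ih =>
    intro S hS
    have h1 : (((Tl K).formPerm) ^ (k+1))⁻¹ = (((Tl K).formPerm) ^ k)⁻¹ * ((Tl K).formPerm)⁻¹ := by
      rw [pow_succ', mul_inv_rev]
    have h2 : S.image ⇑((((Tl K).formPerm) ^ (k+1))⁻¹)
        = (S.image ⇑(((Tl K).formPerm)⁻¹)).image ⇑((((Tl K).formPerm) ^ k)⁻¹) := by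
      rw [Finset.image_image, h1, Equiv.Perm.coe_mul]
    rw [h2]
    exact ih _ (formPerm_inv_mem hK S hS)

lemma formPerm_pow_notmem (hK : IsComplex n K) (k : ℕ)
    {S : Finset (Fin n)} (hS : S ∉ K) : S.image ⇑(((Tl K).formPerm) ^ k) ∉ K := by
  intro h'
  apply hS
  have := formPerm_pow_inv_mem hK k _ h'
  have hid : (S.image ⇑(((Tl K).formPerm) ^ k)).image ⇑((((Tl K).formPerm) ^ k)⁻¹) = S := by
    rw [Finset.image_image]
    have : ⇑((((Tl K).formPerm) ^ k)⁻¹) ∘ ⇑(((Tl K).formPerm) ^ k) = id := by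
      funext a
      simp
    rw [this, Finset.image_id]
  rwa [hid] at this

lemma list_sum_eq (f : Fin n → ℝ) (d : Fin n) :
    ∀ (l : List (Fin n)), l.Nodup →
    ∑ j ∈ l.toFinset, f j = ∑ k ∈ Finset.range l.length, f (l.getD k d) := by
  intro l
  induction l with
  | nil => simp
  | cons a l' ih =>
    intro hnd
    rw [List.nodup_cons] at hnd
    rw [List.toFinset_cons, Finset.sum_insert (by rw [List.mem_toFinset]; exact hnd.1),
      List.length_cons, Finset.sum_range_succ' (fun k => f ((a :: l').getD k d))]
    simp only [List.getD_cons_succ, List.getD_cons_zero]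
    rw [ih hnd.2]
    ring

lemma cycsum (f : Fin n → ℝ) {i : Fin n} (hi : i ∈ Tf K) :
    ∑ k ∈ Finset.range (Tf K).card, f ((((Tl K).formPerm) ^ k) i) = ∑ j ∈ Tf K, f j := by
  have hlen : (Tl K).length = (Tf K).card := Tl_length
  have hiL : i ∈ Tl K := by
    rw [← Tl_toFinset (K := K), List.mem_toFinset] at hi
    exact hi
  obtain ⟨idx, hidx, hval⟩ := List.mem_iff_getElem.mp hiL
  have hpos : 0 < (Tl K).length := lt_of_le_of_lt (Nat.zero_le idx) hidx
  have hstep : ∀ k, (((Tl K).formPerm) ^ k) i = (Tl K).getD ((idx + k) % (Tl K).length) i := by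
    intro k
    conv_lhs => rw [← hval]
    rw [List.formPerm_pow_apply_getElem _ Tl_nodup k idx hidx]
    rw [List.getD_eq_getElem _ _ (Nat.mod_lt _ hpos)]
  rw [← hlen]
  calc ∑ k ∈ Finset.range (Tl K).length, f ((((Tl K).formPerm) ^ k) i)
      = ∑ k ∈ Finset.range (Tl K).length, f ((Tl K).getD ((idx + k) % (Tl K).length) i) := by
        exact Finset.sum_congr rfl (fun k _ => by rw [hstep k])
    _ = ∑ k ∈ Finset.range (Tl K).length, f ((Tl K).getD k i) := by
        apply Finset.sum_nbij' (fun k => (idx + k) % (Tl K).length)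
          (fun j => (j + ((Tl K).length - idx)) % (Tl K).length)
        · intro a _
          exact Finset.mem_range.mpr (Nat.mod_lt _ hpos)
        · intro a _
          exact Finset.mem_range.mpr (Nat.mod_lt _ hpos)
        · intro a ha
          rw [Finset.mem_range] at ha
          rw [Nat.mod_add_mod]
          have he : idx + a + ((Tl K).length - idx) = a + (Tl K).length := by omega
          rw [he, Nat.add_mod_right]
          exact Nat.mod_eq_of_lt ha
        · intro a ha
          rw [Finset.mem_range] at ha
          rw [Nat.add_mod_mod]
          have he : idx + (a + ((Tl K).length - idx)) = a + (Tl K).length := by omega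
          rw [he, Nat.add_mod_right]
          exact Nat.mod_eq_of_lt ha
        · intro a _
          rfl
    _ = ∑ j ∈ Tf K, f j := by
        rw [← Tl_toFinset (K := K), list_sum_eq f i (Tl K) Tl_nodup]

lemma perm_compl (σ : Equiv.Perm (Fin n)) (S : Finset (Fin n)) :
    (S.image ⇑σ)ᶜ = Sᶜ.image ⇑σ := by
  classical
  ext a
  simp only [Finset.mem_compl, Finset.mem_image, not_exists, not_and]
  constructor
  · intro h
    exact ⟨σ.symm a, fun h' => h (σ.symm a) h' (σ.apply_symm_apply a), σ.apply_symm_apply a⟩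
  · rintro ⟨b, hb, rfl⟩ b' hb' hbe
    exact hb (σ.injective hbe ▸ hb')

open scoped Classical in
lemma sym_submod (hK : IsComplex n K) (hxy : IsNonStrictKSubmodular n K x y)
    (hTne : 0 < (Tf K).card) :
    ∃ x' y' : Fin n → ℝ, IsNonStrictKSubmodular n K x' y' ∧
      (∀ i, Topp K i → x' i = ∑ j ∈ Tf K, x j) ∧
      (∀ i, Topp K i → y' i = ∑ j ∈ Tf K, y j) := by
  set σ := (Tl K).formPerm with hσdef
  set N := (Tf K).card with hNdef
  have hNne : (Finset.range N).Nonempty := ⟨0, Finset.mem_range.mpr hTne⟩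
  refine ⟨fun i => ∑ k ∈ Finset.range N, x ((σ ^ k) i),
    fun i => ∑ k ∈ Finset.range N, y ((σ ^ k) i), ?_, ?_, ?_⟩
  · intro X1 c1 c2 h12 h1 h2 hX1 hC
    have hinj : ∀ k : ℕ, Function.Injective ⇑(σ ^ k) := fun k => (σ ^ k).injective
    have hnotmem : ∀ (k : ℕ) (c : Fin n) (S : Finset (Fin n)), c ∉ S →
        (σ^k) c ∉ S.image ⇑(σ^k) := by
      intro k c S hc hmem
      obtain ⟨b, hb, hbe⟩ := Finset.mem_image.mp hmem
      rw [hinj k hbe] at hb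
      exact hc hb
    have himgC : ∀ k : ℕ, insert ((σ^k) c1) (insert ((σ^k) c2) (X1.image ⇑(σ^k)))
        = (insert c1 (insert c2 X1)).image ⇑(σ^k) := by
      intro k
      rw [Finset.image_insert, Finset.image_insert]
    have hconf := fun (k : ℕ) => hxy (X1.image ⇑(σ^k)) ((σ^k) c1) ((σ^k) c2)
      (fun h => h12 (hinj k h)) (hnotmem k c1 X1 h1) (hnotmem k c2 X1 h2)
      (formPerm_pow_mem hK k X1 hX1)
      (by rw [himgC k]; exact formPerm_pow_notmem hK k hC)
    have hsumx : ∀ (k : ℕ) (S : Finset (Fin n)),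
        ∑ i ∈ S.image ⇑(σ^k), x i = ∑ i ∈ S, x ((σ^k) i) :=
      fun k S => Finset.sum_image (fun a _ b _ h => hinj k h)
    have hsumy : ∀ (k : ℕ) (S : Finset (Fin n)),
        ∑ i ∈ S.image ⇑(σ^k), y i = ∑ i ∈ S, y ((σ^k) i) :=
      fun k S => Finset.sum_image (fun a _ b _ h => hinj k h)
    have hcompl : ∀ k : ℕ, ∑ j ∈ ((insert c1 (insert c2 X1)).image ⇑(σ^k))ᶜ, y j
        = ∑ j ∈ (insert c1 (insert c2 X1))ᶜ, y ((σ^k) j) := by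
      intro k
      rw [perm_compl (σ^k), hsumy k]
    have hswapX1 : ∑ i ∈ X1, (∑ k ∈ Finset.range N, x ((σ^k) i))
        = ∑ k ∈ Finset.range N, ∑ i ∈ X1, x ((σ^k) i) := Finset.sum_comm
    have hswapC : ∑ j ∈ (insert c1 (insert c2 X1))ᶜ, (∑ k ∈ Finset.range N, y ((σ^k) j))
        = ∑ k ∈ Finset.range N, ∑ j ∈ (insert c1 (insert c2 X1))ᶜ, y ((σ^k) j) :=
      Finset.sum_comm
    refine ⟨?_, ?_, ?_⟩
    · intro hA hB
      have hper : ∀ k ∈ Finset.range N,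
          ∑ j ∈ (insert c1 (insert c2 X1))ᶜ, y ((σ^k) j)
            ≤ ∑ i ∈ X1, x ((σ^k) i) + x ((σ^k) c1) + x ((σ^k) c2) := by
        intro k _
        have := (hconf k).1
          (by rw [← Finset.image_insert]; exact formPerm_pow_mem hK k _ hA)
          (by rw [← Finset.image_insert]; exact formPerm_pow_mem hK k _ hB)
        rw [himgC k, hcompl k, hsumx k X1] at this
        linarith
      have hs := Finset.sum_le_sum hper
      have hdist : ∑ k ∈ Finset.range N,
          (∑ i ∈ X1, x ((σ^k) i) + x ((σ^k) c1) + x ((σ^k) c2))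
          = (∑ k ∈ Finset.range N, ∑ i ∈ X1, x ((σ^k) i))
            + (∑ k ∈ Finset.range N, x ((σ^k) c1)) + (∑ k ∈ Finset.range N, x ((σ^k) c2)) := by
        rw [Finset.sum_add_distrib, Finset.sum_add_distrib]
      simp only []
      rw [ge_iff_le, hswapC, hswapX1]
      linarith
    · intro hA hB
      have hper : ∀ k ∈ Finset.range N,
          ∑ i ∈ X1, x ((σ^k) i)
            ≤ ∑ j ∈ (insert c1 (insert c2 X1))ᶜ, y ((σ^k) j)
              + y ((σ^k) c1) + y ((σ^k) c2) := by
        intro k _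
        have := (hconf k).2.1
          (by rw [← Finset.image_insert]; exact formPerm_pow_notmem hK k hA)
          (by rw [← Finset.image_insert]; exact formPerm_pow_notmem hK k hB)
        rw [himgC k, hcompl k, hsumx k X1] at this
        linarith
      have hs := Finset.sum_le_sum hper
      have hdist : ∑ k ∈ Finset.range N,
          (∑ j ∈ (insert c1 (insert c2 X1))ᶜ, y ((σ^k) j) + y ((σ^k) c1) + y ((σ^k) c2))
          = (∑ k ∈ Finset.range N, ∑ j ∈ (insert c1 (insert c2 X1))ᶜ, y ((σ^k) j))
            + (∑ k ∈ Finset.range N, y ((σ^k) c1)) + (∑ k ∈ Finset.range N, y ((σ^k) c2)) := by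
        rw [Finset.sum_add_distrib, Finset.sum_add_distrib]
      simp only []
      rw [ge_iff_le, hswapC, hswapX1]
      linarith
    · intro hA hB
      have hper : ∀ k : ℕ, 0 < x ((σ^k) c2) ∧ 0 < y ((σ^k) c2) := by
        intro k
        apply (hconf k).2.2
        · rw [← Finset.image_insert]
          exact formPerm_pow_mem hK k _ hA
        · rw [← Finset.image_insert]
          exact formPerm_pow_notmem hK k hB
      constructor
      · exact Finset.sum_pos (fun k _ => (hper k).1) hNne
      · exact Finset.sum_pos (fun k _ => (hper k).2) hNne
  · intro i hi
    exact cycsum x (top_mem_Tf.mpr hi)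
  · intro i hi
    exact cycsum y (top_mem_Tf.mpr hi)


open scoped Classical in
lemma reverse (hK : IsComplex n K) (hproper : K ≠ Set.univ) (hghost : NoGhost n K)
    (hex : ∃ x' y' : Fin n → ℝ, IsNonStrictKSubmodular n K x' y') :
    ∃ (w : Fin n → ℝ) (q : ℝ), RoughlyWeighted n K w q := by
  obtain ⟨x, y, hxy⟩ := hex
  by_cases hvet : ∃ c : Fin n, univ.erase c ∈ K
  · exact assembleVet hK hproper hghost hxy hvet
  · push_neg at hvet
    by_cases hT : 0 < (Tf K).card
    · obtain ⟨x', y', hxy', hx', hy'⟩ := sym_submod hK hxy hT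
      exact assembleNoVet hK hproper hghost hxy' hx' hy' hvet
    · apply assembleNoVet hK hproper hghost hxy (a := (0:ℝ)) (b := (0:ℝ)) ?_ ?_ hvet
      all_goals
        intro i hi
        exfalso
        have hmem : i ∈ Tf K := top_mem_Tf.mpr hi
        rw [Finset.card_eq_zero.mp (by omega : (Tf K).card = 0)] at hmem
        exact Finset.notMem_empty i hmem

end RWproof

/-- A proper simplicial complex `K` on `[n]` without ghost
vertices is roughly weighted (with strictly positive weights and positive quota)
iff it admits a non-strict K-submodular function. -/
theorem roughlyWeighted_iff_exists_nonStrictKSubmodular (n : ℕ)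
    (K : Set (Finset (Fin n))) (hK : IsComplex n K)
    (hproper : K ≠ Set.univ) (hghost : NoGhost n K) :
    (∃ (w : Fin n → ℝ) (q : ℝ), RoughlyWeighted n K w q) ↔
      ∃ x y : Fin n → ℝ, IsNonStrictKSubmodular n K x y := by
  constructor
  · rintro ⟨w, q, h⟩
    exact RWproof.forward hK hproper w q h
  · exact RWproof.reverse hK hproper hghost
end

section
/- Let K be a proper simplicial complex on [n] which is roughly weighted with strictly positive weights w satisfying w([n]) = 1 and quota q with 0 < q < 1. Then for every Z ⊆ [n]: if w(Z) < 1 − q then Z ∈ K°, and if Z ∈ K° then w(Z) ≤ 1 − q. Consequently, K° is also roughly weighted, with the same weights w and quota 1 − q. -/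
open Finset

theorem Finset.sum_compl_eq_sub {ι M : Type*} [Fintype ι] [DecidableEq ι] [AddCommGroup M]
    (s : Finset ι) (f : ι → M) : ∑ i ∈ sᶜ, f i = ∑ i, f i - ∑ i ∈ s, f i :=
  eq_sub_of_add_eq (sum_compl_add_sum s f)

namespace RoughlyWeighted

variable {n : ℕ} {K : Set (Finset (Fin n))} {w : Fin n → ℝ} {q : ℝ}

theorem compl_notMem_of_sum_lt (h : RoughlyWeighted n K w q) {Z : Finset (Fin n)}
    (hZ : ∑ i ∈ Z, w i < ∑ i, w i - q) : Zᶜ ∉ K :=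
  (h.2.2 Zᶜ).1 (by rw [sum_compl_eq_sub]; linarith)

theorem sum_le_of_compl_notMem (h : RoughlyWeighted n K w q) {Z : Finset (Fin n)}
    (hZ : Zᶜ ∉ K) : ∑ i ∈ Z, w i ≤ ∑ i, w i - q :=
  le_of_not_gt fun hlt => hZ ((h.2.2 Zᶜ).2 (by rw [sum_compl_eq_sub]; linarith))

theorem dual (h : RoughlyWeighted n K w q) (hq : q < ∑ i, w i) :
    RoughlyWeighted n {A : Finset (Fin n) | Aᶜ ∉ K} w (∑ i, w i - q) :=
  ⟨h.1, sub_pos.2 hq, fun _ =>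
    ⟨fun hlt hZ => (h.sum_le_of_compl_notMem hZ).not_gt hlt, h.compl_notMem_of_sum_lt⟩⟩

end RoughlyWeighted

theorem dual_roughlyWeighted_general (n : ℕ) (K : Set (Finset (Fin n)))
    (w : Fin n → ℝ) (q : ℝ) (hrw : RoughlyWeighted n K w q)
    (hsum : ∑ i, w i = 1) (hq1 : q < 1) :
    (∀ Z : Finset (Fin n), ∑ i ∈ Z, w i < 1 - q → Zᶜ ∉ K) ∧
    (∀ Z : Finset (Fin n), Zᶜ ∉ K → ∑ i ∈ Z, w i ≤ 1 - q) ∧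
    RoughlyWeighted n {A : Finset (Fin n) | Aᶜ ∉ K} w (1 - q) := by
  rw [← hsum] at hq1 ⊢
  exact ⟨fun _ => hrw.compl_notMem_of_sum_lt, fun _ => hrw.sum_le_of_compl_notMem,
    hrw.dual hq1⟩

/-- If a proper simplicial complex `K` on `[n]` is roughly
weighted with strictly positive weights `w`, `w([n]) = 1` and quota `0 < q < 1`,
then for every `Z ⊆ [n]`: `w(Z) < 1 - q` implies `Z ∈ K°` (i.e. `Zᶜ ∉ K`), and
`Z ∈ K°` implies `w(Z) ≤ 1 - q`. Consequently the Alexander dual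
`K° = {A : Aᶜ ∉ K}` is roughly weighted with the same weights and quota `1 - q`. -/
theorem dual_roughlyWeighted (n : ℕ) (K : Set (Finset (Fin n)))
    (hK : IsComplex n K) (hproper : K ≠ Set.univ)
    (w : Fin n → ℝ) (q : ℝ) (hrw : RoughlyWeighted n K w q)
    (hsum : ∑ i, w i = 1) (hq1 : q < 1) :
    (∀ Z : Finset (Fin n), ∑ i ∈ Z, w i < 1 - q → Zᶜ ∉ K) ∧
    (∀ Z : Finset (Fin n), Zᶜ ∉ K → ∑ i ∈ Z, w i ≤ 1 - q) ∧
    RoughlyWeighted n {A : Finset (Fin n) | Aᶜ ∉ K} w (1 - q) :=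
  dual_roughlyWeighted_general n K w q hrw hsum hq1
end

section
/- Let K be a proper simplicial complex on [n]. A face A1 ∪ Ā2 of the Bier complex Bier(K) is a facet (maximal face) if and only if |A1| + |A2| = n − 1. Consequently the facets of Bier(K) are in bijective correspondence with the pairs (A, ν) where ν ∈ [n], A ⊆ [n] \ {ν}, A ∈ K and A ∪ {ν} ∉ K, the correspondence being A1 = A and A2 = [n] \ (A ∪ {ν}). -/
/-!
A face `A1 ∪ Ā2` has `A1 ⊊ [n] \ A2` (the latter is not in `K`), so `|A1| + |A2| ≤ n - 1`,
and a face of that size cannot be enlarged. Conversely, if two vertices `μ ≠ ν` lie outside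
`A1 ∪ A2`, then either `A1 ∪ {μ} ∈ K`, or `A1 ∪ {μ} ∉ K` and then neither is its superset
`[n] \ (A2 ∪ {ν})`, so that `A2 ∪ {ν} ∈ K°`; either way the face is not maximal.
For `|A1| + |A2| = n - 1` the unique vertex `ν` outside `A1 ∪ A2` gives `A2 = [n] \ (A1 ∪ {ν})`
and `A1 ∪ {ν} = [n] \ A2 ∉ K`.
-/

open Finset

/-- Faces of the Bier complex `Bier(K)` on the vertex set `[n] ⊔ [n̄]`
(encoded as `Fin n ⊕ Fin n`, with `Sum.inl` the unbarred copy and `Sum.inr`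
the barred copy): sets `A1 ∪ Ā2` for disjoint `A1 ∈ K` and `A2 ∈ K°`
(i.e. `A2ᶜ ∉ K`). -/
def BierFace (n : ℕ) (K : Set (Finset (Fin n))) (τ : Finset (Fin n ⊕ Fin n)) : Prop :=
  ∃ A1 A2 : Finset (Fin n), Disjoint A1 A2 ∧ A1 ∈ K ∧ A2ᶜ ∉ K ∧
    τ = A1.image Sum.inl ∪ A2.image Sum.inr

/-- A facet of `Bier(K)`: a face maximal with respect to inclusion. -/
def BierFacet (n : ℕ) (K : Set (Finset (Fin n))) (τ : Finset (Fin n ⊕ Fin n)) : Prop :=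
  BierFace n K τ ∧ ∀ σ : Finset (Fin n ⊕ Fin n), BierFace n K σ → τ ⊆ σ → τ = σ

theorem Finset.image_inl_union_image_inr {α β : Type*} [DecidableEq (α ⊕ β)]
    (s : Finset α) (t : Finset β) : s.image Sum.inl ∪ t.image Sum.inr = s.disjSum t := by
  ext (a | b) <;> simp

section LowerSet

variable {α : Type*} [Fintype α] [DecidableEq α] {K : Set (Finset α)} {s t : Finset α}

theorem card_add_card_lt_of_mem_of_compl_notMem (hst : Disjoint s t) (hs : s ∈ K)
    (ht : tᶜ ∉ K) : #s + #t < Fintype.card α := by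
  have hlt : s ⊂ tᶜ :=
    (subset_compl_iff_disjoint_right.2 hst).ssubset_of_ne (by rintro rfl; exact ht hs)
  calc #s + #t < #tᶜ + #t := by gcongr
    _ = Fintype.card α := card_compl_add_card t

theorem insert_mem_or_compl_insert_notMem (hK : IsLowerSet K) (hst : Disjoint s t) {μ ν : α}
    (hμν : μ ≠ ν) (hμ : μ ∉ t) (hν : ν ∉ s) : insert μ s ∈ K ∨ (insert ν t)ᶜ ∉ K := by
  refine or_iff_not_imp_right.2 fun h => hK (fun x hx => ?_) (not_not.1 h)
  simp only [mem_insert, mem_compl, not_or] at hx ⊢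
  rcases hx with rfl | hx
  · exact ⟨hμν, hμ⟩
  · exact ⟨fun h => hν (h ▸ hx), disjoint_left.1 hst hx⟩

theorem card_add_card_eq_iff (hst : Disjoint s t) (hs : s ∈ K) (ht : tᶜ ∉ K) :
    #s + #t = Fintype.card α - 1 ↔ ∃ ν ∉ s, insert ν s ∉ K ∧ t = (insert ν s)ᶜ := by
  constructor
  · intro hcard
    have hsub : s ⊆ tᶜ := subset_compl_iff_disjoint_right.2 hst
    have hone : #(tᶜ \ s) = 1 := by
      rw [card_sdiff_of_subset hsub, card_compl]
      have := card_add_card_lt_of_mem_of_compl_notMem hst hs ht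
      omega
    obtain ⟨ν, hν⟩ := card_eq_one.1 hone
    have hνs : ν ∉ s := (mem_sdiff.1 (hν ▸ mem_singleton_self ν)).2
    have hinsert : insert ν s = tᶜ := by
      rw [← sdiff_union_of_subset hsub, hν, insert_eq]
    exact ⟨ν, hνs, hinsert ▸ ht, by rw [hinsert, compl_compl]⟩
  · rintro ⟨ν, hν, -, rfl⟩
    have := card_le_univ (insert ν s)
    rw [card_insert_of_notMem hν] at this
    rw [card_compl, card_insert_of_notMem hν]
    omega

end LowerSet

theorem IsComplex.isLowerSet {n : ℕ} {K : Set (Finset (Fin n))} (hK : IsComplex n K) :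
    IsLowerSet K :=
  fun _ _ hBA hA => hK.2 _ _ hBA hA

section Bier

variable {n : ℕ} {K : Set (Finset (Fin n))} {A1 A2 : Finset (Fin n)}
  {σ τ : Finset (Fin n ⊕ Fin n)}

theorem bierFace_disjSum_iff :
    BierFace n K (A1.disjSum A2) ↔ Disjoint A1 A2 ∧ A1 ∈ K ∧ A2ᶜ ∉ K := by
  simp [BierFace, image_inl_union_image_inr]

theorem BierFace.card_lt (hσ : BierFace n K σ) : #σ < n := by
  obtain ⟨B1, B2, hB, h1, h2, rfl⟩ := hσ
  rw [image_inl_union_image_inr, card_disjSum]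
  simpa using card_add_card_lt_of_mem_of_compl_notMem hB h1 h2

theorem bierFacet_of_card_eq (hτ : BierFace n K τ) (hcard : #τ = n - 1) : BierFacet n K τ :=
  ⟨hτ, fun _ hσ hsub => eq_of_subset_of_card_le hsub (by have := hσ.card_lt; omega)⟩

theorem BierFacet.not_ssubset (hτ : BierFacet n K τ) (hσ : BierFace n K σ) : ¬τ ⊂ σ :=
  fun h => h.ne (hτ.2 σ hσ h.subset)

theorem BierFacet.card_add_card_eq (hK : IsLowerSet K) (hf : BierFacet n K (A1.disjSum A2)) :
    #A1 + #A2 = n - 1 := by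
  obtain ⟨hdis, h1, h2⟩ := bierFace_disjSum_iff.1 hf.1
  have hlt := hf.1.card_lt
  rw [card_disjSum] at hlt
  by_contra hne
  have hfree : 1 < #(A1 ∪ A2)ᶜ := by
    rw [card_compl, Fintype.card_fin, card_union_of_disjoint hdis]
    omega
  obtain ⟨μ, hμ, ν, hν, hμν⟩ := one_lt_card.1 hfree
  simp only [mem_compl, mem_union, not_or] at hμ hν
  rcases insert_mem_or_compl_insert_notMem hK hdis hμν hμ.2 hν.1 with hμK | hνK
  · exact hf.not_ssubset (bierFace_disjSum_iff.2 ⟨disjoint_insert_left.2 ⟨hμ.2, hdis⟩, hμK, h2⟩)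
      (disjSum_ssubset_disjSum_of_ssubset_of_subset (ssubset_insert hμ.1) Subset.rfl)
  · exact hf.not_ssubset (bierFace_disjSum_iff.2 ⟨disjoint_insert_right.2 ⟨hν.1, hdis⟩, h1, hνK⟩)
      (disjSum_ssubset_disjSum_of_subset_of_ssubset Subset.rfl (ssubset_insert hν.2))

end Bier

theorem bierFacet_iff_general (n : ℕ) (K : Set (Finset (Fin n)))
    (hK : IsComplex n K)
    (A1 A2 : Finset (Fin n)) (hdis : Disjoint A1 A2) (h1 : A1 ∈ K) (h2 : A2ᶜ ∉ K) :
    (BierFacet n K (A1.image Sum.inl ∪ A2.image Sum.inr) ↔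
      A1.card + A2.card = n - 1) ∧
    (BierFacet n K (A1.image Sum.inl ∪ A2.image Sum.inr) ↔
      ∃ ν : Fin n, ν ∉ A1 ∧ insert ν A1 ∉ K ∧ A2 = (insert ν A1)ᶜ) := by
  rw [image_inl_union_image_inr]
  have hfacet : BierFacet n K (A1.disjSum A2) ↔ #A1 + #A2 = n - 1 :=
    ⟨BierFacet.card_add_card_eq hK.isLowerSet, fun hcard =>
      bierFacet_of_card_eq (bierFace_disjSum_iff.2 ⟨hdis, h1, h2⟩) (by rwa [card_disjSum])⟩
  refine ⟨hfacet, hfacet.trans ?_⟩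
  simpa using card_add_card_eq_iff hdis h1 h2

/-- For a proper simplicial complex `K` on `[n]`, a face
`A1 ∪ Ā2` of `Bier(K)` is a facet iff `|A1| + |A2| = n - 1`; consequently the
facets correspond exactly to the pairs `(A, ν)` with `ν ∉ A`, `A ∈ K`,
`A ∪ {ν} ∉ K` via `A1 = A`, `A2 = [n] \ (A ∪ {ν})`. -/
theorem bierFacet_iff (n : ℕ) (K : Set (Finset (Fin n)))
    (hK : IsComplex n K) (hproper : K ≠ Set.univ)
    (A1 A2 : Finset (Fin n)) (hdis : Disjoint A1 A2) (h1 : A1 ∈ K) (h2 : A2ᶜ ∉ K) :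
    (BierFacet n K (A1.image Sum.inl ∪ A2.image Sum.inr) ↔
      A1.card + A2.card = n - 1) ∧
    (BierFacet n K (A1.image Sum.inl ∪ A2.image Sum.inr) ↔
      ∃ ν : Fin n, ν ∉ A1 ∧ insert ν A1 ∉ K ∧ A2 = (insert ν A1)ᶜ) :=
  bierFacet_iff_general n K hK A1 A2 hdis h1 h2
end

section
/- Let L be a proper simplicial complex on [n] and let A ⊆ [n] with A ∉ L, A ≠ [n], such that every proper subset of A belongs to L (so that K = L ∪ {A} is again a proper simplicial complex). Then, writing facets of Bier complexes as pairs (A1, A2) of disjoint sets with A1 in the complex, A2 in its Alexander dual, and |A1| + |A2| = n − 1, one has: Facets(Bier(L ∪ {A})) = ( Facets(Bier(L)) \ { (A \ {i}, Aᶜ) : i ∈ A } ) ∪ { (A, (A ∪ {i})ᶜ) : i ∈ [n] \ A }. -/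
open Finset

/-- The facets of `Bier(K)`, identified with pairs `(A1, A2)` of disjoint sets
with `A1 ∈ K`, `A2 ∈ K°` (i.e. `A2ᶜ ∉ K`) and `|A1| + |A2| = n - 1`. -/
def FacetPairs (n : ℕ) (K : Set (Finset (Fin n))) :
    Set (Finset (Fin n) × Finset (Fin n)) :=
  {p | Disjoint p.1 p.2 ∧ p.1 ∈ K ∧ p.2ᶜ ∉ K ∧ p.1.card + p.2.card = n - 1}

/- The facet condition says exactly that `p.1 ⋖ p.2ᶜ` is a covering pair with `p.1 ∈ K`,
`p.2ᶜ ∉ K`. Adding `A` to `L` only changes which covering pairs straddle the boundary of the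
complex: those with top `A` are lost, those with bottom `A` are gained. -/
theorem mem_facetPairs_iff {n : ℕ} {K : Set (Finset (Fin n))}
    {p : Finset (Fin n) × Finset (Fin n)} :
    p ∈ FacetPairs n K ↔ p.1 ∈ K ∧ p.2ᶜ ∉ K ∧ p.1 ⋖ p.2ᶜ := by
  obtain ⟨σ, ρ⟩ := p
  have hcard_compl : #ρᶜ = n - #ρ := by rw [card_compl, Fintype.card_fin]
  have hρ_le : #ρ ≤ n := card_le_univ ρ |>.trans_eq (Fintype.card_fin n)
  simp only [FacetPairs, Set.mem_ofPred_eq, covBy_iff_exists_insert, exists_eq_insert_iff,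
    ← subset_compl_iff_disjoint_right]
  constructor
  · rintro ⟨hsub, hσ, hρc, hcard⟩
    -- `σ ∈ K` and `ρᶜ ∉ K` make the inclusion strict, which rules out the truncated case `n = 0`
    have hlt : #σ < #ρᶜ := card_lt_card (hsub.ssubset_of_ne (ne_of_mem_of_not_mem hσ hρc))
    exact ⟨hσ, hρc, hsub, by omega⟩
  · rintro ⟨hσ, hρc, hsub, hcard⟩
    exact ⟨hsub, hσ, hρc, by omega⟩

theorem exists_eq_erase_compl_iff {α : Type*} [Fintype α] [DecidableEq α] {σ τ A : Finset α} :
    (∃ i ∈ A, (σ, τᶜ) = (A.erase i, Aᶜ)) ↔ σ ⋖ τ ∧ τ = A := by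
  simp only [Prod.mk.injEq, compl_inj_iff, covBy_iff_exists_erase]
  constructor
  · rintro ⟨i, hi, rfl, rfl⟩
    exact ⟨⟨i, hi, rfl⟩, rfl⟩
  · rintro ⟨⟨i, hi, rfl⟩, rfl⟩
    exact ⟨i, hi, rfl, rfl⟩

theorem exists_eq_insert_compl_iff {α : Type*} [Fintype α] [DecidableEq α] {σ τ A : Finset α} :
    (∃ i ∉ A, (σ, τᶜ) = (A, (insert i A)ᶜ)) ↔ σ = A ∧ σ ⋖ τ := by
  simp only [Prod.mk.injEq, compl_inj_iff, covBy_iff_exists_insert]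
  constructor
  · rintro ⟨i, hi, rfl, rfl⟩
    exact ⟨rfl, i, hi, rfl⟩
  · rintro ⟨rfl, i, hi, rfl⟩
    exact ⟨i, hi, rfl, rfl⟩

theorem facets_bier_union_singleton_general (n : ℕ) (L : Set (Finset (Fin n)))
    (hL : IsComplex n L)
    (A : Finset (Fin n)) (hA : A ∉ L) :
    FacetPairs n (L ∪ {A}) =
      (FacetPairs n L \
        {p : Finset (Fin n) × Finset (Fin n) | ∃ i ∈ A, p = (A.erase i, Aᶜ)}) ∪
      {p : Finset (Fin n) × Finset (Fin n) | ∃ i ∉ A, p = (A, (insert i A)ᶜ)} := by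
  ext ⟨σ, ρ⟩
  obtain ⟨τ, rfl⟩ : ∃ τ, ρ = τᶜ := ⟨ρᶜ, (compl_compl ρ).symm⟩
  simp only [Set.mem_union, Set.mem_sdiff, Set.mem_ofPred_eq, Set.mem_singleton_iff,
    mem_facetPairs_iff, compl_compl, exists_eq_erase_compl_iff, exists_eq_insert_compl_iff]
  constructor
  · rintro ⟨hσ | rfl, hτ, hcov⟩
    · exact Or.inl ⟨⟨hσ, fun h => hτ (Or.inl h), hcov⟩, fun h => hτ (Or.inr h.2)⟩
    · exact Or.inr ⟨rfl, hcov⟩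
  · rintro (⟨⟨hσ, hτ, hcov⟩, hτA⟩ | ⟨rfl, hcov⟩)
    · exact ⟨Or.inl hσ, fun h => h.elim hτ (hτA ⟨hcov, ·⟩), hcov⟩
    · exact ⟨Or.inr rfl, fun h => h.elim (hA <| hL.2 σ τ hcov.le ·) hcov.ne', hcov⟩

/-- If `L` is a proper simplicial complex on `[n]` and
`A ∉ L`, `A ≠ [n]`, with every proper subset of `A` in `L`, then the facets of
`Bier(L ∪ {A})` are obtained from those of `Bier(L)` by removing the pairs
`(A \ {i}, Aᶜ)` for `i ∈ A` and adding the pairs `(A, (A ∪ {i})ᶜ)` for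
`i ∉ A`. -/
theorem facets_bier_union_singleton (n : ℕ) (L : Set (Finset (Fin n)))
    (hL : IsComplex n L) (hproper : L ≠ Set.univ)
    (A : Finset (Fin n)) (hA : A ∉ L) (hAne : A ≠ Finset.univ)
    (hsub : ∀ B : Finset (Fin n), B ⊂ A → B ∈ L) :
    FacetPairs n (L ∪ {A}) =
      (FacetPairs n L \
        {p : Finset (Fin n) × Finset (Fin n) | ∃ i ∈ A, p = (A.erase i, Aᶜ)}) ∪
      {p : Finset (Fin n) × Finset (Fin n) | ∃ i ∉ A, p = (A, (insert i A)ᶜ)} :=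
  facets_bier_union_singleton_general n L hL A hA
end

section
/- Let K be a proper simplicial complex on [n] without ghost vertices. Then K admits a K-submodular function if and only if there exist vectors x, y : [n] → ℝ with x(i) > 0 and y(i) > 0 for all i ∈ [n] such that for every Λ-configuration ridge datum x(X1) + x(c1) + x(c2) > y(X2) and for every V-configuration ridge datum y(X2) + y(c1) + y(c2) > x(X1). In other words, the strict X-configuration condition x(c2) + y(c2) > 0 may be replaced by the stronger requirement that all coordinates of x and y are strictly positive without affecting the solvability of the system. -/
open Finset

/-- `N` is a "Λ-nonface": a nonface with two distinct removable elements. -/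
def SKAlam (n : ℕ) (K : Set (Finset (Fin n))) (N : Finset (Fin n)) : Prop :=
  N ∉ K ∧ ∃ c1 c2, c1 ≠ c2 ∧ c1 ∈ N ∧ c2 ∈ N ∧ N.erase c1 ∈ K ∧ N.erase c2 ∈ K

/-- `F` is a "V-face": a face with two distinct nonface extensions. -/
def SKAvee (n : ℕ) (K : Set (Finset (Fin n))) (F : Finset (Fin n)) : Prop :=
  F ∈ K ∧ ∃ d1 d2, d1 ≠ d2 ∧ d1 ∉ F ∧ d2 ∉ F ∧ insert d1 F ∉ K ∧ insert d2 F ∉ K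

/-- `i` is an X-distinguished element. -/
def SKAp (n : ℕ) (K : Set (Finset (Fin n))) (i : Fin n) : Prop :=
  ∃ F c, F ∈ K ∧ i ∉ F ∧ insert i F ∈ K ∧ c ∉ F ∧ c ≠ i ∧ insert c F ∉ K

/-- The set of non-X-distinguished ("weakest") elements. -/
noncomputable def SKAQ (n : ℕ) (K : Set (Finset (Fin n))) : Finset (Fin n) :=
  @Finset.filter _ (fun i => ¬ SKAp n K i) (Classical.decPred _) Finset.univ

lemma SKA_up {n K} (hK : IsComplex n K) {A B : Finset (Fin n)} (hAB : A ⊆ B) (hA : A ∉ K) :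
    B ∉ K := fun hB => hA (hK.2 A B hAB hB)

lemma SKA_mem_Q {n K} {i : Fin n} : i ∈ SKAQ n K ↔ ¬ SKAp n K i := by
  simp [SKAQ]

/-- Swapping a weakest element out of a face for anything keeps it a face. -/
lemma SKA_faceswap {n K} (hK : IsComplex n K) {i : Fin n} (hi : i ∈ SKAQ n K)
    {G : Finset (Fin n)} {d : Fin n} (hG : G ∈ K) (hiG : i ∈ G) (hd : d ∉ G) :
    insert d (G.erase i) ∈ K := by
  by_contra h
  exact (SKA_mem_Q.1 hi) ⟨G.erase i, d, hK.2 _ G (erase_subset i G) hG, notMem_erase i G,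
    by rwa [insert_erase hiG], fun hc => hd (mem_of_mem_erase hc), fun hc => hd (hc ▸ hiG), h⟩

/-- Swapping a weakest element into a nonface keeps it a nonface. -/
lemma SKA_nonfaceswap {n K} (hK : IsComplex n K) {j : Fin n} (hj : j ∈ SKAQ n K)
    {G : Finset (Fin n)} {i : Fin n} (hG : G ∉ K) (hiG : i ∈ G) (hjG : j ∉ G) :
    insert j (G.erase i) ∉ K := by
  intro h
  have hij : i ≠ j := fun e => hjG (e ▸ hiG)
  have := SKA_faceswap hK hj h (mem_insert_self _ _)
    (show i ∉ insert j (G.erase i) by simp [hij])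
  rw [erase_insert (fun hc => hjG (Finset.mem_of_mem_erase hc) : j ∉ G.erase i), insert_erase hiG] at this
  exact hG this

lemma SKA_lam_swap {n K} (hK : IsComplex n K) {N : Finset (Fin n)} {i j : Fin n}
    (hiQ : i ∈ SKAQ n K) (hjQ : j ∈ SKAQ n K) (hiN : i ∈ N) (hjN : j ∉ N)
    (h : SKAlam n K N) : SKAlam n K (insert j (N.erase i)) := by
  obtain ⟨hNK, c1, c2, hc12, hc1N, hc2N, h1, h2⟩ := h
  have hjNi : j ∉ N.erase i := fun hc => hjN (mem_of_mem_erase hc)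
  refine ⟨SKA_nonfaceswap hK hjQ hNK hiN hjN, ?_⟩
  have hkey : ∀ c, c ∈ N → N.erase c ∈ K → c ≠ i →
      c ∈ insert j (N.erase i) ∧ (insert j (N.erase i)).erase c ∈ K := by
    intro c hcN hcK hci
    have hjc : j ≠ c := fun e => hjN (e ▸ hcN)
    refine ⟨mem_insert_of_mem (mem_erase.2 ⟨hci, hcN⟩), ?_⟩
    rw [Finset.erase_insert_of_ne hjc, Finset.erase_right_comm]
    exact SKA_faceswap hK hiQ hcK (mem_erase.2 ⟨Ne.symm hci, hiN⟩)
      (fun hc => hjN (mem_of_mem_erase hc))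
  have hkeyj : N.erase i ∈ K → j ∈ insert j (N.erase i) ∧
      (insert j (N.erase i)).erase j ∈ K := by
    intro hNi
    exact ⟨mem_insert_self _ _, by rwa [Finset.erase_insert hjNi]⟩
  by_cases hic1 : i = c1
  · obtain ⟨m1, k1⟩ := hkeyj (hic1 ▸ h1)
    obtain ⟨m2, k2⟩ := hkey c2 hc2N h2 (fun e => hc12 (hic1.symm.trans e.symm))
    exact ⟨j, c2, fun e => hjN (e ▸ hc2N), m1, m2, k1, k2⟩
  · by_cases hic2 : i = c2
    · obtain ⟨m1, k1⟩ := hkeyj (hic2 ▸ h2)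
      obtain ⟨m2, k2⟩ := hkey c1 hc1N h1 (fun e => hc12 (e.trans hic2))
      exact ⟨j, c1, fun e => hjN (e ▸ hc1N), m1, m2, k1, k2⟩
    · obtain ⟨m1, k1⟩ := hkey c1 hc1N h1 (fun e => hic1 e.symm)
      obtain ⟨m2, k2⟩ := hkey c2 hc2N h2 (fun e => hic2 e.symm)
      exact ⟨c1, c2, hc12, m1, m2, k1, k2⟩

lemma SKA_vee_swap {n K} (hK : IsComplex n K) {F : Finset (Fin n)} {i j : Fin n}
    (hiQ : i ∈ SKAQ n K) (hjQ : j ∈ SKAQ n K) (hiF : i ∈ F) (hjF : j ∉ F)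
    (h : SKAvee n K F) : SKAvee n K (insert j (F.erase i)) := by
  obtain ⟨hFK, d1, d2, hd12, hd1F, hd2F, h1, h2⟩ := h
  have hjFi : j ∉ F.erase i := fun hc => hjF (mem_of_mem_erase hc)
  have hF' : insert j (F.erase i) ∈ K := SKA_faceswap hK hiQ hFK hiF hjF
  -- pick d* ∈ {d1, d2} with d* ≠ j
  obtain ⟨d, hdF, hdK, hdj⟩ : ∃ d, d ∉ F ∧ insert d F ∉ K ∧ d ≠ j := by
    by_cases hj1 : d1 = j
    · exact ⟨d2, hd2F, h2, fun e => hd12 (hj1.trans e.symm)⟩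
    · exact ⟨d1, hd1F, h1, hj1⟩
  -- `insert j F` is a nonface
  have hjFnon : insert j F ∉ K := by
    intro hc
    have := SKA_faceswap hK hjQ hc (mem_insert_self _ _)
      (show d ∉ insert j F by simp [hdF, hdj])
    rw [Finset.erase_insert hjF] at this
    exact hdK this
  have hdi : d ≠ i := fun e => hdF (e ▸ hiF)
  have hdF' : d ∉ insert j (F.erase i) := by simp [hdj, hdi, hdF]
  have hiF' : i ∉ insert j (F.erase i) := by
    simp [show i ≠ j from fun e => hjF (e ▸ hiF)]
  -- `i` is a non-extension of the swapped face
  have hiK : insert i (insert j (F.erase i)) ∉ K := by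
    rw [Finset.insert_comm, Finset.insert_erase hiF]
    exact hjFnon
  -- `d` is a non-extension of the swapped face
  have hdK' : insert d (insert j (F.erase i)) ∉ K := by
    intro hc
    have := SKA_faceswap hK hjQ hc
      (mem_insert_of_mem (mem_insert_self _ _))
      (show i ∉ insert d (insert j (F.erase i)) by simp [Ne.symm hdi, hiF'])
    rw [Finset.erase_insert_of_ne hdj, Finset.erase_insert hjFi,
      Finset.insert_comm, Finset.insert_erase hiF] at this
    exact hdK this
  exact ⟨hF', i, d, Ne.symm hdi, hiF', hdF', hiK, hdK'⟩

/-- Generic replacement of the Q-part of a set, for predicates closed under Q-swaps. -/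
lemma SKA_replace {n K} (Pr : Finset (Fin n) → Prop)
    (hswap : ∀ N i j, i ∈ SKAQ n K → j ∈ SKAQ n K → i ∈ N → j ∉ N → Pr N →
      Pr (insert j (N.erase i))) :
    ∀ (m : ℕ) (N R : Finset (Fin n)), Pr N → R ⊆ SKAQ n K →
      R.card = (N ∩ SKAQ n K).card → ((N ∩ SKAQ n K) \ R).card = m →
      Pr ((N \ SKAQ n K) ∪ R) := by
  intro m
  induction m with
  | zero =>
    intro N R hPr hRQ hcard hdiff
    have hsub : (N ∩ SKAQ n K) ⊆ R := by
      intro x hx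
      by_contra hxR
      have : x ∈ (N ∩ SKAQ n K) \ R := mem_sdiff.2 ⟨hx, hxR⟩
      rw [card_eq_zero] at hdiff
      simp [hdiff] at this
    have heq : R = N ∩ SKAQ n K := Finset.eq_of_subset_of_card_le hsub (le_of_eq hcard) |>.symm
    have : (N \ SKAQ n K) ∪ R = N := by
      rw [heq]
      ext x
      simp only [mem_union, mem_sdiff, mem_inter]
      tauto
    rwa [this]
  | succ m ih =>
    intro N R hPr hRQ hcard hdiff
    have hne : ((N ∩ SKAQ n K) \ R).Nonempty := by
      rw [← card_pos, hdiff]; omega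
    obtain ⟨i, hi⟩ := hne
    obtain ⟨hiNQ, hiR⟩ := mem_sdiff.1 hi
    obtain ⟨hiN, hiQ⟩ := mem_inter.1 hiNQ
    have hne2 : (R \ (N ∩ SKAQ n K)).Nonempty := by
      by_contra hc
      rw [not_nonempty_iff_eq_empty, sdiff_eq_empty_iff_subset] at hc
      have heq : R = N ∩ SKAQ n K := Finset.eq_of_subset_of_card_le hc (le_of_eq hcard.symm)
      rw [← heq, sdiff_self] at hdiff
      simp at hdiff
    obtain ⟨j, hj⟩ := hne2
    obtain ⟨hjR, hjNQ⟩ := mem_sdiff.1 hj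
    have hjQ : j ∈ SKAQ n K := hRQ hjR
    have hjN : j ∉ N := fun hc => hjNQ (mem_inter.2 ⟨hc, hjQ⟩)
    have hij : i ≠ j := fun e => hjN (e ▸ hiN)
    set N' := insert j (N.erase i) with hN'
    have hPr' : Pr N' := hswap N i j hiQ hjQ hiN hjN hPr
    have hNQ' : N' ∩ SKAQ n K = insert j ((N ∩ SKAQ n K).erase i) := by
      ext x
      by_cases hxj : x = j
      · subst hxj; simp [hjQ, hN']
      · simp only [hN', mem_inter, mem_insert, mem_erase]
        constructor
        · rintro ⟨hx1 | ⟨hxi, hxN⟩, hxQ⟩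
          · exact absurd hx1 hxj
          · exact Or.inr ⟨hxi, hxN, hxQ⟩
        · rintro (h | ⟨hxi, hxN, hxQ⟩)
          · exact absurd h hxj
          · exact ⟨Or.inr ⟨hxi, hxN⟩, hxQ⟩
    have hjninQ : j ∉ (N ∩ SKAQ n K).erase i := fun hc => hjNQ (mem_of_mem_erase hc)
    have hcard' : R.card = (N' ∩ SKAQ n K).card := by
      rw [hNQ', card_insert_of_notMem hjninQ, card_erase_of_mem hiNQ, hcard]
      have : 0 < (N ∩ SKAQ n K).card := card_pos.2 ⟨i, hiNQ⟩
      omega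
    have hdiff' : ((N' ∩ SKAQ n K) \ R).card = m := by
      have : (N' ∩ SKAQ n K) \ R = ((N ∩ SKAQ n K) \ R).erase i := by
        rw [hNQ']
        ext x
        simp only [mem_sdiff, mem_insert, mem_erase]
        constructor
        · rintro ⟨rfl | ⟨hxi, hxNQ⟩, hxR⟩
          · exact absurd hjR hxR
          · exact ⟨hxi, hxNQ, hxR⟩
        · rintro ⟨hxi, hxNQ, hxR⟩
          exact ⟨Or.inr ⟨hxi, hxNQ⟩, hxR⟩
      rw [this, card_erase_of_mem hi, hdiff]
      omega
    have hPP : N' \ SKAQ n K = N \ SKAQ n K := by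
      ext x
      simp only [hN', mem_sdiff, mem_insert, mem_erase]
      constructor
      · rintro ⟨rfl | ⟨hxi, hxN⟩, hxQ⟩
        · exact absurd hjQ hxQ
        · exact ⟨hxN, hxQ⟩
      · rintro ⟨hxN, hxQ⟩
        exact ⟨Or.inr ⟨fun e => hxQ (e ▸ hiQ), hxN⟩, hxQ⟩
    have := ih N' R hPr' hRQ hcard' hdiff'
    rwa [hPP] at this

lemma SKA_argmin {n : ℕ} (Q : Finset (Fin n)) (u : Fin n → ℝ) (a : ℕ) (ha : a ≤ Q.card) :
    ∃ R, R ⊆ Q ∧ R.card = a ∧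
      (Q.card : ℝ) * ∑ i ∈ R, u i ≤ (a : ℝ) * ∑ i ∈ Q, u i := by
  have hne : (Q.powersetCard a).Nonempty := powersetCard_nonempty.2 ha
  obtain ⟨R, hRmem, hRmin⟩ := Finset.exists_min_image _ (fun R => ∑ i ∈ R, u i) hne
  obtain ⟨hRQ, hRcard⟩ := Finset.mem_powersetCard.1 hRmem
  refine ⟨R, hRQ, hRcard, ?_⟩
  -- every element outside R (in Q) has u-value at least every element of R
  have hout : ∀ r ∈ R, ∀ q ∈ Q \ R, u r ≤ u q := by
    intro r hr q hq
    obtain ⟨hqQ, hqR⟩ := mem_sdiff.1 hq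
    have hR' : insert q (R.erase r) ∈ Q.powersetCard a := by
      rw [Finset.mem_powersetCard]
      constructor
      · intro x hx
        rcases mem_insert.1 hx with rfl | hx'
        · exact hqQ
        · exact hRQ (mem_of_mem_erase hx')
      · rw [card_insert_of_notMem (fun hc => hqR (mem_of_mem_erase hc)),
          card_erase_of_mem hr, hRcard]
        have : 0 < a := hRcard ▸ card_pos.2 ⟨r, hr⟩
        omega
    have := hRmin _ hR'
    rw [Finset.sum_insert (fun hc => hqR (mem_of_mem_erase hc)),
      Finset.sum_erase_eq_sub hr] at this
    linarith
  -- double counting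
  have hsplit : ∑ i ∈ Q, u i = ∑ i ∈ R, u i + ∑ i ∈ Q \ R, u i := by
    rw [add_comm, Finset.sum_sdiff hRQ]
  have hQcard : Q.card = a + (Q \ R).card := by
    rw [← hRcard, Finset.card_sdiff_of_subset hRQ]
    have := Finset.card_le_card hRQ
    omega
  have hkey : ((Q \ R).card : ℝ) * ∑ i ∈ R, u i ≤ (a : ℝ) * ∑ i ∈ Q \ R, u i := by
    have h1 : ∑ r ∈ R, ∑ q ∈ Q \ R, u r ≤ ∑ r ∈ R, ∑ q ∈ Q \ R, u q :=
      Finset.sum_le_sum (fun r hr => Finset.sum_le_sum (fun q hq => hout r hr q hq))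
    simp only [Finset.sum_const, nsmul_eq_mul] at h1
    calc ((Q \ R).card : ℝ) * ∑ i ∈ R, u i ≤ ∑ r ∈ R, ((Q \ R).card : ℝ) * u r := by
          rw [Finset.mul_sum]
      _ ≤ (R.card : ℝ) * ∑ q ∈ Q \ R, u q := h1
      _ = (a : ℝ) * ∑ q ∈ Q \ R, u q := by rw [hRcard]
  rw [hsplit, hQcard]
  push_cast
  nlinarith [hkey]

lemma SKA_argmax {n : ℕ} (Q : Finset (Fin n)) (u : Fin n → ℝ) (a : ℕ) (ha : a ≤ Q.card) :
    ∃ R, R ⊆ Q ∧ R.card = a ∧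
      (a : ℝ) * ∑ i ∈ Q, u i ≤ (Q.card : ℝ) * ∑ i ∈ R, u i := by
  obtain ⟨R, h1, h2, h3⟩ := SKA_argmin Q (fun i => - u i) a ha
  refine ⟨R, h1, h2, ?_⟩
  simp only [Finset.sum_neg_distrib, mul_neg, neg_le_neg_iff] at h3
  linarith

lemma SKA_boundary {n K} (hK : IsComplex n K) :
    ∀ (m : ℕ) (F W : Finset (Fin n)), F ∈ K → W ∉ K → F ⊆ W → (W \ F).card = m →
      ∃ G p, G ∈ K ∧ F ⊆ G ∧ G ⊆ W ∧ p ∈ W ∧ p ∉ G ∧ insert p G ∉ K := by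
  intro m
  induction m with
  | zero =>
    intro F W hF hW hFW hcard
    exfalso
    rw [card_eq_zero, sdiff_eq_empty_iff_subset] at hcard
    exact hW ((Finset.Subset.antisymm hcard hFW) ▸ hF)
  | succ m ih =>
    intro F W hF hW hFW hcard
    have hne : (W \ F).Nonempty := by rw [← card_pos, hcard]; omega
    obtain ⟨p, hp⟩ := hne
    obtain ⟨hpW, hpF⟩ := mem_sdiff.1 hp
    by_cases hpK : insert p F ∈ K
    · have hsub : insert p F ⊆ W := insert_subset hpW hFW
      have hcard' : (W \ insert p F).card = m := by
        have : W \ insert p F = (W \ F).erase p := by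
          ext x; simp only [mem_sdiff, mem_erase, mem_insert]; tauto
        rw [this, card_erase_of_mem hp, hcard]
        omega
      obtain ⟨G, q, h1, h2, h3, h4, h5, h6⟩ := ih (insert p F) W hpK hW hsub hcard'
      exact ⟨G, q, h1, fun x hx => h2 (mem_insert_of_mem hx), h3, h4, h5, h6⟩
    · exact ⟨F, p, hF, Finset.Subset.refl F, hFW, hpW, hpF, hpK⟩

/-- The certificate lemma: a "bad pair" yields a Λ-nonface and a V-face with
nested P-parts and strictly comparable Q-part sizes. -/
lemma SKA_cert {n K} (hK : IsComplex n K) {N₀ F₀ : Finset (Fin n)}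
    (hN₀ : SKAlam n K N₀) (hF₀ : SKAvee n K F₀)
    (hbad : (N₀ ∩ SKAQ n K).card < (F₀ ∩ SKAQ n K).card) :
    ∃ N F, SKAlam n K N ∧ SKAvee n K F ∧ (N \ SKAQ n K) ⊆ F ∧
      (F ∩ SKAQ n K).card < (N ∩ SKAQ n K).card := by
  set Q := SKAQ n K with hQdef
  by_cases hcase : (N₀ ∩ Q).Nonempty
  -- Case A : N₀ contains a weakest element
  · obtain ⟨q', hq'⟩ := hcase
    obtain ⟨hq'N, hq'Q⟩ := mem_inter.1 hq'
    -- there is a weakest element outside N₀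
    obtain ⟨q, hqQ, hqN⟩ : ∃ q ∈ Q, q ∉ N₀ := by
      by_contra hc
      push_neg at hc
      have : Q ⊆ N₀ ∩ Q := fun x hx => mem_inter.2 ⟨hc x hx, hx⟩
      have h1 := Finset.card_le_card this
      have h2 := Finset.card_le_card (inter_subset_right (s₁ := F₀) (s₂ := Q))
      omega
    obtain ⟨hN₀K, c1, c2, hc12, hc1N, hc2N, h1, h2⟩ := hN₀
    -- N₀.erase q' is a face
    have hFK : N₀.erase q' ∈ K := by
      by_cases hq'c1 : q' = c1
      · exact hq'c1 ▸ h1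
      · have := SKA_faceswap hK hq'Q h1 (mem_erase.2 ⟨hq'c1, hq'N⟩)
          (notMem_erase c1 N₀)
        rwa [Finset.erase_right_comm, Finset.insert_erase
          (mem_erase.2 ⟨fun e => hq'c1 e.symm, hc1N⟩)] at this
    have hq'ne : q' ∉ N₀.erase q' := notMem_erase _ _
    have hqne : q ∉ N₀.erase q' := fun hc => hqN (mem_of_mem_erase hc)
    have hqq' : q ≠ q' := fun e => hqN (e ▸ hq'N)
    have hins1 : insert q' (N₀.erase q') ∉ K := by
      rw [Finset.insert_erase hq'N]; exact hN₀K
    have hins2 : insert q (N₀.erase q') ∉ K := by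
      intro hc
      have := SKA_faceswap hK hqQ hc (mem_insert_self _ _)
        (show q' ∉ insert q (N₀.erase q') by simp [Ne.symm hqq', hq'ne])
      rw [Finset.erase_insert hqne, Finset.insert_erase hq'N] at this
      exact hN₀K this
    refine ⟨N₀, N₀.erase q', ⟨hN₀K, c1, c2, hc12, hc1N, hc2N, h1, h2⟩,
      ⟨hFK, q', q, Ne.symm hqq', hq'ne, hqne, hins1, hins2⟩, ?_, ?_⟩
    · intro x hx
      obtain ⟨hxN, hxQ⟩ := mem_sdiff.1 hx
      exact mem_erase.2 ⟨fun e => hxQ (e ▸ hq'Q), hxN⟩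
    · have : N₀.erase q' ∩ Q = (N₀ ∩ Q).erase q' := by
        ext x; simp only [mem_inter, mem_erase]; tauto
      rw [this, card_erase_of_mem hq']
      have : 0 < (N₀ ∩ Q).card := card_pos.2 ⟨q', hq'⟩
      omega
  -- N₀ has no weakest elements
  · rw [not_nonempty_iff_eq_empty] at hcase
    have hF₀Qne : (F₀ ∩ Q).Nonempty := by
      rw [← card_pos]; omega
    obtain ⟨hF₀K, d1, d2, hd12, hd1F, hd2F, hv1, hv2⟩ := hF₀
    by_cases hcase2 : ∃ q ∈ Q, q ∉ F₀
    -- Case B : a weakest element outside F₀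
    · obtain ⟨q, hqQ, hqF⟩ := hcase2
      obtain ⟨q₀, hq₀⟩ := hF₀Qne
      obtain ⟨hq₀F, hq₀Q⟩ := mem_inter.1 hq₀
      have hqq₀ : q ≠ q₀ := fun e => hqF (e ▸ hq₀F)
      obtain ⟨d, hdF, hdK, hdq⟩ : ∃ d, d ∉ F₀ ∧ insert d F₀ ∉ K ∧ d ≠ q := by
        by_cases hq1 : d1 = q
        · exact ⟨d2, hd2F, hv2, fun e => hd12 (hq1 ▸ e ▸ rfl)⟩
        · exact ⟨d1, hd1F, hv1, hq1⟩
      have hNK : insert q F₀ ∉ K := by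
        intro hc
        have := SKA_faceswap hK hqQ hc (mem_insert_self _ _)
          (show d ∉ insert q F₀ by simp [hdq, hdF])
        rw [Finset.erase_insert hqF] at this
        exact hdK this
      have hrem1 : (insert q F₀).erase q ∈ K := by
        rw [Finset.erase_insert hqF]; exact hF₀K
      have hrem2 : (insert q F₀).erase q₀ ∈ K := by
        rw [Finset.erase_insert_of_ne hqq₀]
        exact SKA_faceswap hK hq₀Q hF₀K hq₀F hqF
      refine ⟨insert q F₀, F₀,
        ⟨hNK, q, q₀, hqq₀, mem_insert_self _ _, mem_insert_of_mem hq₀F, hrem1, hrem2⟩,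
        ⟨hF₀K, d1, d2, hd12, hd1F, hd2F, hv1, hv2⟩, ?_, ?_⟩
      · intro x hx
        obtain ⟨hxN, hxQ⟩ := mem_sdiff.1 hx
        rcases mem_insert.1 hxN with rfl | hx'
        · exact absurd hqQ hxQ
        · exact hx'
      · have : insert q F₀ ∩ Q = insert q (F₀ ∩ Q) := by
          ext x
          by_cases hxq : x = q
          · subst hxq; simp [hqQ]
          · simp only [mem_inter, mem_insert]; tauto
        rw [this, card_insert_of_notMem (fun hc => hqF (mem_inter.1 hc).1)]
        omega
    -- Case C : Q ⊆ F₀ and N₀ ∩ Q = ∅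
    · push_neg at hcase2
      have hQF₀ : Q ⊆ F₀ := hcase2
      have hQne : Q.Nonempty := by
        obtain ⟨x, hx⟩ := hF₀Qne; exact ⟨x, (mem_inter.1 hx).2⟩
      obtain ⟨q, hqQ⟩ := hQne
      have hqF₀ : q ∈ F₀ := hQF₀ hqQ
      have hqN₀ : q ∉ N₀ := fun hc => by
        have : q ∈ N₀ ∩ Q := mem_inter.2 ⟨hc, hqQ⟩
        simp [hcase] at this
      obtain ⟨hN₀K, c1, c2, hc12, hc1N, hc2N, h1, h2⟩ := hN₀
      have hWnon : F₀ ∪ N₀ ∉ K := SKA_up hK subset_union_right hN₀K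
      obtain ⟨G, p, hGK, hF₀G, hGW, hpW, hpG, hpGK⟩ :=
        SKA_boundary hK ((F₀ ∪ N₀) \ F₀).card F₀ (F₀ ∪ N₀) hF₀K hWnon subset_union_left rfl
      have hpN₀ : p ∈ N₀ := by
        rcases mem_union.1 hpW with h | h
        · exact absurd (hF₀G h) hpG
        · exact h
      have hpQ : p ∉ Q := fun hc => by
        have : p ∈ N₀ ∩ Q := mem_inter.2 ⟨hpN₀, hc⟩
        simp [hcase] at this
      have hqG : q ∈ G := hF₀G hqF₀
      have hpq : p ≠ q := fun e => hpG (e ▸ hqG)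
      -- N₁ = insert p G is a Λ-nonface
      have hrem1 : (insert p G).erase p ∈ K := by rw [Finset.erase_insert hpG]; exact hGK
      have hrem2 : (insert p G).erase q ∈ K := by
        rw [Finset.erase_insert_of_ne hpq]
        exact SKA_faceswap hK hqQ hGK hqG hpG
      -- the big face H avoiding q
      have hW₂ : Finset.univ.erase q ∉ K := by
        apply SKA_up hK _ hN₀K
        intro x hx
        exact mem_erase.2 ⟨fun e => hqN₀ (e ▸ hx), mem_univ x⟩
      have hF₂K : insert p (G.erase q) ∈ K := by
        rw [← Finset.erase_insert_of_ne hpq]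
        exact hrem2
      have hF₂sub : insert p (G.erase q) ⊆ Finset.univ.erase q := by
        intro x hx
        rcases mem_insert.1 hx with rfl | hx'
        · exact mem_erase.2 ⟨hpq, mem_univ _⟩
        · exact mem_erase.2 ⟨(mem_erase.1 hx').1, mem_univ _⟩
      obtain ⟨H, d, hHK, hF₂H, hHW₂, hdW₂, hdH, hdHK⟩ :=
        SKA_boundary hK _ _ _ hF₂K hW₂ hF₂sub rfl
      have hqH : q ∉ H := fun hc => (mem_erase.1 (hHW₂ hc)).1 rfl
      have hqd : q ≠ d := fun e => (mem_erase.1 hdW₂).1 e.symm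
      have hsub : insert p G ⊆ insert q H := by
        intro x hx
        rcases mem_insert.1 hx with rfl | hxG
        · exact mem_insert_of_mem (hF₂H (mem_insert_self _ _))
        · by_cases hxq : x = q
          · exact hxq ▸ mem_insert_self _ _
          · exact mem_insert_of_mem (hF₂H (mem_insert_of_mem (mem_erase.2 ⟨hxq, hxG⟩)))
      have hqHK : insert q H ∉ K := SKA_up hK hsub hpGK
      refine ⟨insert p G, H,
        ⟨hpGK, p, q, hpq, mem_insert_self _ _, mem_insert_of_mem hqG, hrem1, hrem2⟩,
        ⟨hHK, q, d, hqd, hqH, hdH, hqHK, hdHK⟩, ?_, ?_⟩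
      · intro x hx
        obtain ⟨hxN, hxQ⟩ := mem_sdiff.1 hx
        rcases mem_insert.1 hxN with rfl | hxG
        · exact hF₂H (mem_insert_self _ _)
        · have hxq : x ≠ q := fun e => hxQ (e ▸ hqQ)
          exact hF₂H (mem_insert_of_mem (mem_erase.2 ⟨hxq, hxG⟩))
      · have hN₁Q : insert p G ∩ Q = Q := by
          apply Finset.Subset.antisymm inter_subset_right
          intro x hx
          exact mem_inter.2 ⟨mem_insert_of_mem (hF₀G (hQF₀ hx)), hx⟩
        have hHQ : H ∩ Q ⊆ Q.erase q := by
          intro x hx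
          obtain ⟨hxH, hxQ⟩ := mem_inter.1 hx
          exact mem_erase.2 ⟨fun e => hqH (e ▸ hxH), hxQ⟩
        have hle := Finset.card_le_card hHQ
        rw [card_erase_of_mem hqQ] at hle
        rw [hN₁Q]
        have : 0 < Q.card := card_pos.2 ⟨q, hqQ⟩
        omega
  



lemma SKA_sum_lam {n K} (hK : IsComplex n K) {x y : Fin n → ℝ}
    (hxy : IsKSubmodular n K x y) {N : Finset (Fin n)} (h : SKAlam n K N) :
    ∑ j ∈ Nᶜ, (x j + y j) < ∑ j, x j := by
  obtain ⟨hNK, c1, c2, hc12, hc1N, hc2N, h1, h2⟩ := h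
  set X1 := (N.erase c1).erase c2 with hX1def
  have hc2X : c2 ∉ X1 := notMem_erase _ _
  have hc1X : c1 ∉ X1 := fun hc => notMem_erase c1 N (mem_of_mem_erase hc)
  have hi2 : insert c2 X1 = N.erase c1 :=
    Finset.insert_erase (mem_erase.2 ⟨Ne.symm hc12, hc2N⟩)
  have hiN : insert c1 (insert c2 X1) = N := by
    rw [hi2]; exact Finset.insert_erase hc1N
  have hX1K : X1 ∈ K := hK.2 _ _ (erase_subset _ _) h1
  have h1' : insert c1 X1 ∈ K := by
    rw [hX1def, Finset.erase_right_comm]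
    rw [Finset.insert_erase (mem_erase.2 ⟨hc12, hc1N⟩)]
    exact h2
  have h2' : insert c2 X1 ∈ K := hi2 ▸ h1
  obtain ⟨hclause, -, -⟩ := hxy X1 c1 c2 hc12 hc1X hc2X hX1K (hiN ▸ hNK)
  have hL := hclause h1' h2'
  rw [hiN] at hL
  have hsN : ∑ i ∈ N, x i = ∑ i ∈ X1, x i + x c1 + x c2 := by
    rw [← hiN, Finset.sum_insert (by rw [hi2]; exact notMem_erase _ _),
      Finset.sum_insert hc2X]
    ring
  have hcompl := Finset.sum_compl_add_sum N x
  have hcy := Finset.sum_compl_add_sum N y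
  have hadd : ∑ j ∈ Nᶜ, (x j + y j) = ∑ j ∈ Nᶜ, x j + ∑ j ∈ Nᶜ, y j :=
    Finset.sum_add_distrib
  linarith

lemma SKA_sum_vee {n K} (hK : IsComplex n K) {x y : Fin n → ℝ}
    (hxy : IsKSubmodular n K x y) {F : Finset (Fin n)} (h : SKAvee n K F) :
    ∑ j, x j < ∑ j ∈ Fᶜ, (x j + y j) := by
  obtain ⟨hFK, d1, d2, hd12, hd1F, hd2F, h1, h2⟩ := h
  have hNK : insert d1 (insert d2 F) ∉ K :=
    SKA_up hK (by rw [Finset.insert_comm]; exact subset_insert _ _) h1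
  obtain ⟨-, hclause, -⟩ := hxy F d1 d2 hd12 hd1F hd2F hFK hNK
  have hV := hclause h1 h2
  set X2 := (insert d1 (insert d2 F))ᶜ with hX2
  have hd1X2 : d1 ∉ X2 := by simp [hX2]
  have hd2X2 : d2 ∉ X2 := by simp [hX2]
  have hins : insert d1 (insert d2 X2) = Fᶜ := by
    ext z
    simp only [hX2, mem_insert, Finset.mem_compl, mem_insert]
    by_cases hz1 : z = d1
    · subst hz1; simp [hd1F]
    · by_cases hz2 : z = d2
      · subst hz2; simp [hd2F]
      · simp [hz1, hz2]
  have hsum : ∑ j ∈ Fᶜ, y j = ∑ j ∈ X2, y j + y d1 + y d2 := by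
    rw [← hins, Finset.sum_insert (by simp [hd12, hd1X2]), Finset.sum_insert hd2X2]
    ring
  have hcompl := Finset.sum_compl_add_sum F x
  have hcy : ∑ j ∈ Fᶜ, (x j + y j) = ∑ j ∈ Fᶜ, x j + ∑ j ∈ Fᶜ, y j :=
    Finset.sum_add_distrib
  linarith

lemma SKA_pos_p {n K} (hK : IsComplex n K) {x y : Fin n → ℝ}
    (hxy : IsKSubmodular n K x y) {i : Fin n} (h : SKAp n K i) :
    0 < x i + y i := by
  obtain ⟨F, c, hFK, hiF, hinsK, hcF, hci, hcK⟩ := h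
  have hciF : c ∉ insert i F := by simp [hci, hcF]
  have hNK : insert c (insert i F) ∉ K :=
    SKA_up hK (by rw [Finset.insert_comm]; exact subset_insert _ _) hcK
  obtain ⟨-, -, hclause⟩ := hxy F c i hci hcF hiF hFK hNK
  exact hclause hinsK hcK


lemma SKA_main {n K} (hK : IsComplex n K) (hproper : K ≠ Set.univ)
    {x y : Fin n → ℝ} (hxy : IsKSubmodular n K x y) :
    ∃ (v : Fin n → ℝ) (S : ℝ), (∀ i, 0 < v i) ∧ 0 < S ∧ S < ∑ j, v j ∧
      (∀ N, SKAlam n K N → ∑ j ∈ Nᶜ, v j < S) ∧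
      (∀ F, SKAvee n K F → S < ∑ j ∈ Fᶜ, v j) := by
  classical
  set u : Fin n → ℝ := fun i => x i + y i with hu
  set S₀ : ℝ := ∑ j, x j with hS₀
  set Q := SKAQ n K with hQ
  set γ : ℝ := (∑ i ∈ Q, u i) / Q.card with hγ
  have hP : ∀ i, i ∉ Q → 0 < u i := by
    intro i hi
    rw [hQ, SKA_mem_Q, not_not] at hi
    exact SKA_pos_p hK hxy hi
  -- averaged constraints
  have hA : ∀ N, SKAlam n K N →
      ∑ j, u j - S₀ < ∑ j ∈ N \ Q, u j + ((N ∩ Q).card : ℝ) * γ := by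
    intro N hN
    have hle : (N ∩ Q).card ≤ Q.card := card_le_card inter_subset_right
    obtain ⟨R, hRQ, hRcard, hRsum⟩ := SKA_argmin Q u (N ∩ Q).card hle
    have hRγ : ∑ i ∈ R, u i ≤ ((N ∩ Q).card : ℝ) * γ := by
      rcases Nat.eq_zero_or_pos Q.card with h0 | hpos
      · have hR0 : R = ∅ := by
          rw [← Finset.card_eq_zero]
          have := card_le_card hRQ; omega
        have ha0 : (N ∩ Q).card = 0 := by omega
        simp [hR0, ha0]
      · have hc : (0:ℝ) < Q.card := by exact_mod_cast hpos
        rw [hγ, ← mul_div_assoc, le_div_iff₀ hc]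
        linarith
    have hlam' : SKAlam n K ((N \ Q) ∪ R) :=
      SKA_replace (SKAlam n K)
        (fun N i j hi hj hiN hjN h => SKA_lam_swap hK hi hj hiN hjN h)
        ((N ∩ Q) \ R).card N R hN hRQ hRcard rfl
    have hcon := SKA_sum_lam hK hxy hlam'
    have hsplit := Finset.sum_compl_add_sum ((N \ Q) ∪ R) u
    have hdisj : Disjoint (N \ Q) R := by
      rw [Finset.disjoint_left]
      intro a ha haR
      exact (mem_sdiff.1 ha).2 (hRQ haR)
    have hN' : ∑ j ∈ (N \ Q) ∪ R, u j = ∑ j ∈ N \ Q, u j + ∑ j ∈ R, u j :=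
      Finset.sum_union hdisj
    have hcon' : ∑ j ∈ ((N \ Q) ∪ R)ᶜ, u j < S₀ := hcon
    linarith
  have hB : ∀ F, SKAvee n K F →
      ∑ j ∈ F \ Q, u j + ((F ∩ Q).card : ℝ) * γ < ∑ j, u j - S₀ := by
    intro F hF
    have hle : (F ∩ Q).card ≤ Q.card := card_le_card inter_subset_right
    obtain ⟨R, hRQ, hRcard, hRsum⟩ := SKA_argmax Q u (F ∩ Q).card hle
    have hRγ : ((F ∩ Q).card : ℝ) * γ ≤ ∑ i ∈ R, u i := by
      rcases Nat.eq_zero_or_pos Q.card with h0 | hpos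
      · have hR0 : R = ∅ := by
          rw [← Finset.card_eq_zero]
          have := card_le_card hRQ; omega
        have ha0 : (F ∩ Q).card = 0 := by omega
        simp [hR0, ha0]
      · have hc : (0:ℝ) < Q.card := by exact_mod_cast hpos
        rw [hγ, ← mul_div_assoc, div_le_iff₀ hc]
        linarith
    have hvee' : SKAvee n K ((F \ Q) ∪ R) :=
      SKA_replace (SKAvee n K)
        (fun N i j hi hj hiN hjN h => SKA_vee_swap hK hi hj hiN hjN h)
        ((F ∩ Q) \ R).card F R hF hRQ hRcard rfl
    have hcon := SKA_sum_vee hK hxy hvee'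
    have hsplit := Finset.sum_compl_add_sum ((F \ Q) ∪ R) u
    have hdisj : Disjoint (F \ Q) R := by
      rw [Finset.disjoint_left]
      intro a ha haR
      exact (mem_sdiff.1 ha).2 (hRQ haR)
    have hF' : ∑ j ∈ (F \ Q) ∪ R, u j = ∑ j ∈ F \ Q, u j + ∑ j ∈ R, u j :=
      Finset.sum_union hdisj
    have hcon' : S₀ < ∑ j ∈ ((F \ Q) ∪ R)ᶜ, u j := hcon
    linarith
  -- splitting sums of if-functions
  have hsplitif : ∀ (ε : ℝ) (A : Finset (Fin n)),
      ∑ j ∈ A, (if j ∈ Q then ε else u j)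
        = ∑ j ∈ A \ Q, u j + ((A ∩ Q).card : ℝ) * ε := by
    intro ε A
    rw [← Finset.sum_filter_add_sum_filter_not A (fun j => j ∈ Q)]
    have h1 : A.filter (fun j => j ∈ Q) = A ∩ Q := Finset.filter_mem_eq_inter
    have h2 : A.filter (fun j => ¬ j ∈ Q) = A \ Q := by
      rw [Finset.sdiff_eq_filter]
    have h3 : ∑ j ∈ A.filter (fun j => j ∈ Q), (if j ∈ Q then ε else u j)
        = ((A ∩ Q).card : ℝ) * ε := by
      rw [Finset.sum_congr rfl (fun j hj => if_pos (Finset.mem_filter.1 hj).2),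
        Finset.sum_const, h1, nsmul_eq_mul]
    have h4 : ∑ j ∈ A.filter (fun j => ¬ j ∈ Q), (if j ∈ Q then ε else u j)
        = ∑ j ∈ A \ Q, u j := by
      rw [Finset.sum_congr rfl (fun j hj => if_neg (Finset.mem_filter.1 hj).2), h2]
    rw [h3, h4]
    ring
  -- a positive vector with the pairwise property
  obtain ⟨v, hvpos, hvpair⟩ : ∃ v : Fin n → ℝ, (∀ i, 0 < v i) ∧
      ∀ N F, SKAlam n K N → SKAvee n K F → ∑ j ∈ F, v j < ∑ j ∈ N, v j := by
    by_cases hbad : ∃ N F, SKAlam n K N ∧ SKAvee n K F ∧ (N ∩ Q).card < (F ∩ Q).card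
    · obtain ⟨N₁, F₁, hN₁, hF₁, hc⟩ := hbad
      obtain ⟨N₂, F₂, hN₂, hF₂, hsub, hc2⟩ := SKA_cert hK hN₁ hF₁ hc
      have hγpos : 0 < γ := by
        have h1 := hA N₂ hN₂
        have h2 := hB F₂ hF₂
        have hsub' : N₂ \ Q ⊆ F₂ \ Q := fun z hz =>
          mem_sdiff.2 ⟨hsub hz, (mem_sdiff.1 hz).2⟩
        have hmono : ∑ j ∈ N₂ \ Q, u j ≤ ∑ j ∈ F₂ \ Q, u j :=
          Finset.sum_le_sum_of_subset_of_nonneg hsub'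
            (fun j hj _ => le_of_lt (hP j (mem_sdiff.1 hj).2))
        have hcast : ((F₂ ∩ Q).card : ℝ) < ((N₂ ∩ Q).card : ℝ) := by exact_mod_cast hc2
        nlinarith
      refine ⟨fun i => if i ∈ Q then γ else u i, ?_, ?_⟩
      · intro i
        by_cases h : i ∈ Q
        · simpa [h] using hγpos
        · simpa [h] using hP i h
      · intro N F hN hF
        have h1 := hA N hN
        have h2 := hB F hF
        rw [hsplitif γ N, hsplitif γ F]
        linarith
    · push_neg at hbad
      refine ⟨fun i => if i ∈ Q then max γ 1 else u i, ?_, ?_⟩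
      · intro i
        by_cases h : i ∈ Q
        · simp only [h, if_true]
          exact lt_of_lt_of_le one_pos (le_max_right γ 1)
        · simpa [h] using hP i h
      · intro N F hN hF
        have h1 := hA N hN
        have h2 := hB F hF
        have hba : ((F ∩ Q).card : ℝ) ≤ ((N ∩ Q).card : ℝ) := by
          exact_mod_cast hbad N F hN hF
        have hge : γ ≤ max γ 1 := le_max_left γ 1
        rw [hsplitif (max γ 1) N, hsplitif (max γ 1) F]
        nlinarith
  -- now choose the threshold S
  have hn1 : (Finset.univ : Finset (Fin n)).Nonempty := by
    rcases (Finset.univ : Finset (Fin n)).eq_empty_or_nonempty with h | h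
    · exfalso
      apply hproper
      ext A
      simp only [Set.mem_univ, iff_true]
      have hA0 : A = ∅ := Finset.subset_empty.1 (h ▸ Finset.subset_univ A)
      exact hA0 ▸ hK.1
    · exact h
  have hT : 0 < ∑ j, v j := Finset.sum_pos (fun i _ => hvpos i) hn1
  set T := ∑ j, v j with hTdef
  have huniv : ∀ A : Finset (Fin n), ∑ j ∈ Aᶜ, v j = T - ∑ j ∈ A, v j := by
    intro A
    have := Finset.sum_compl_add_sum A v
    rw [hTdef]
    linarith
  set LS : Finset ℝ := insert 0 ((Finset.univ.filter (fun N => SKAlam n K N)).image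
    (fun N => ∑ j ∈ Nᶜ, v j)) with hLS
  set VS : Finset ℝ := insert T ((Finset.univ.filter (fun F => SKAvee n K F)).image
    (fun F => ∑ j ∈ Fᶜ, v j)) with hVS
  have hLSne : LS.Nonempty := ⟨0, by simp [hLS]⟩
  have hVSne : VS.Nonempty := ⟨T, by simp [hVS]⟩
  have hkey : ∀ a ∈ LS, ∀ b ∈ VS, a < b := by
    intro a ha b hb
    rw [hLS, mem_insert] at ha
    rw [hVS, mem_insert] at hb
    have hbT : b = T ∨ ∃ F, SKAvee n K F ∧ b = ∑ j ∈ Fᶜ, v j := by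
      rcases hb with rfl | hb
      · exact Or.inl rfl
      · obtain ⟨F, hF, rfl⟩ := Finset.mem_image.1 hb
        exact Or.inr ⟨F, (Finset.mem_filter.1 hF).2, rfl⟩
    have haT : a = 0 ∨ ∃ N, SKAlam n K N ∧ a = ∑ j ∈ Nᶜ, v j := by
      rcases ha with rfl | ha
      · exact Or.inl rfl
      · obtain ⟨N, hN, rfl⟩ := Finset.mem_image.1 ha
        exact Or.inr ⟨N, (Finset.mem_filter.1 hN).2, rfl⟩
    have hbpos : 0 < b := by
      rcases hbT with rfl | ⟨F, hF, rfl⟩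
      · exact hT
      · obtain ⟨-, d1, -, -, hd1F, -, -, -⟩ := hF
        exact Finset.sum_pos (fun i _ => hvpos i) ⟨d1, Finset.mem_compl.2 hd1F⟩
    rcases haT with rfl | ⟨N, hN, rfl⟩
    · exact hbpos
    · have hNne : N.Nonempty := by
        rcases N.eq_empty_or_nonempty with rfl | h
        · exact absurd hK.1 hN.1
        · exact h
      obtain ⟨e, he⟩ := hNne
      have hNlt : ∑ j ∈ Nᶜ, v j < T := by
        rw [hTdef]
        exact Finset.sum_lt_sum_of_subset (Finset.subset_univ Nᶜ) (Finset.mem_univ e)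
          (by simp [he]) (hvpos e) (fun j _ _ => le_of_lt (hvpos j))
      rcases hbT with rfl | ⟨F, hF, rfl⟩
      · exact hNlt
      · have := hvpair N F hN hF
        rw [huniv N, huniv F]
        linarith
  have hM : LS.max' hLSne < VS.min' hVSne := by
    rw [Finset.max'_lt_iff]
    intro a ha
    rw [Finset.lt_min'_iff]
    intro b hb
    exact hkey a ha b hb
  set M0 := LS.max' hLSne with hM0
  set M1 := VS.min' hVSne with hM1
  refine ⟨v, (M0 + M1)/2, hvpos, ?_, ?_, ?_, ?_⟩
  · have h0 : (0:ℝ) ∈ LS := by simp [hLS]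
    have := Finset.le_max' LS 0 h0
    rw [← hM0] at this
    linarith
  · have hTmem : T ∈ VS := by simp [hVS]
    have := Finset.min'_le VS T hTmem
    rw [← hM1] at this
    rw [← hTdef]
    linarith
  · intro N hN
    have hmem : ∑ j ∈ Nᶜ, v j ∈ LS := by
      rw [hLS]
      exact mem_insert_of_mem (Finset.mem_image.2
        ⟨N, Finset.mem_filter.2 ⟨Finset.mem_univ N, hN⟩, rfl⟩)
    have := Finset.le_max' LS _ hmem
    rw [← hM0] at this
    linarith
  · intro F hF
    have hmem : ∑ j ∈ Fᶜ, v j ∈ VS := by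
      rw [hVS]
      exact mem_insert_of_mem (Finset.mem_image.2
        ⟨F, Finset.mem_filter.2 ⟨Finset.mem_univ F, hF⟩, rfl⟩)
    have := Finset.min'_le VS _ hmem
    rw [← hM1] at this
    linarith

/-- A proper simplicial complex `K` on `[n]` without ghost
vertices admits a K-submodular function iff there exist strictly positive
vectors `x, y` satisfying the Λ-configuration and V-configuration inequalities
for every ridge datum: the X-configuration condition `x(c2) + y(c2) > 0` may be
replaced by strict positivity of all coordinates. -/
theorem exists_KSubmodular_iff_positive (n : ℕ) (K : Set (Finset (Fin n)))
    (hK : IsComplex n K) (hproper : K ≠ Set.univ) (hghost : NoGhost n K) :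
    (∃ x y : Fin n → ℝ, IsKSubmodular n K x y) ↔
      ∃ x y : Fin n → ℝ, (∀ i, 0 < x i) ∧ (∀ i, 0 < y i) ∧
        ∀ (X1 : Finset (Fin n)) (c1 c2 : Fin n),
          c1 ≠ c2 → c1 ∉ X1 → c2 ∉ X1 → X1 ∈ K → insert c1 (insert c2 X1) ∉ K →
          ((insert c1 X1 ∈ K → insert c2 X1 ∈ K →
              ∑ i ∈ X1, x i + x c1 + x c2 > ∑ j ∈ (insert c1 (insert c2 X1))ᶜ, y j) ∧
           (insert c1 X1 ∉ K → insert c2 X1 ∉ K →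
              ∑ j ∈ (insert c1 (insert c2 X1))ᶜ, y j + y c1 + y c2 > ∑ i ∈ X1, x i)) := by
  constructor
  · rintro ⟨x, y, hxy⟩
    obtain ⟨v, S, hvpos, hS0, hST, hLam, hVee⟩ := SKA_main hK hproper hxy
    set T := ∑ j, v j with hTdef
    have hT : 0 < T := lt_trans hS0 hST
    have hTne : T ≠ 0 := ne_of_gt hT
    refine ⟨fun i => v i * (S / T), fun i => v i * ((T - S) / T), ?_, ?_, ?_⟩
    · exact fun i => mul_pos (hvpos i) (div_pos hS0 hT)
    · exact fun i => mul_pos (hvpos i) (div_pos (by linarith) hT)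
    intro X1 c1 c2 hne h1 h2 hX1K hNK
    set x' : Fin n → ℝ := fun i => v i * (S / T) with hx'
    set y' : Fin n → ℝ := fun i => v i * ((T - S) / T) with hy'
    have hvxy : ∀ j, y' j = v j - x' j := by
      intro j
      rw [hx', hy']
      field_simp
    have hsx : ∑ j, x' j = S := by
      rw [hx', ← Finset.sum_mul, ← hTdef]
      field_simp
    have hc1i : c1 ∉ insert c2 X1 := by simp [hne, h1]
    constructor
    · intro h1K h2K
      have hNlam : SKAlam n K (insert c1 (insert c2 X1)) := by
        refine ⟨hNK, c1, c2, hne, mem_insert_self _ _,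
          mem_insert_of_mem (mem_insert_self _ _), ?_, ?_⟩
        · rw [Finset.erase_insert hc1i]
          exact h2K
        · rw [Finset.erase_insert_of_ne hne, Finset.erase_insert h2]
          exact h1K
      have hlt := hLam _ hNlam
      have hsumN : ∑ j ∈ insert c1 (insert c2 X1), x' j
          = ∑ i ∈ X1, x' i + x' c1 + x' c2 := by
        rw [Finset.sum_insert hc1i, Finset.sum_insert h2]
        ring
      have hcomplx := Finset.sum_compl_add_sum (insert c1 (insert c2 X1)) x'
      have hsuby : ∑ j ∈ (insert c1 (insert c2 X1))ᶜ, y' j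
          = ∑ j ∈ (insert c1 (insert c2 X1))ᶜ, v j
            - ∑ j ∈ (insert c1 (insert c2 X1))ᶜ, x' j := by
        rw [← Finset.sum_sub_distrib]
        exact Finset.sum_congr rfl (fun j _ => hvxy j)
      rw [hsuby]
      linarith
    · intro h1K h2K
      have hFvee : SKAvee n K X1 := ⟨hX1K, c1, c2, hne, h1, h2, h1K, h2K⟩
      have hgt := hVee _ hFvee
      have hc1N : c1 ∈ insert c1 (insert c2 X1) := mem_insert_self _ _
      have hc2N : c2 ∈ insert c1 (insert c2 X1) :=
        mem_insert_of_mem (mem_insert_self _ _)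
      have hins : insert c1 (insert c2 ((insert c1 (insert c2 X1))ᶜ)) = X1ᶜ := by
        ext z
        simp only [mem_insert, Finset.mem_compl, mem_insert]
        by_cases hz1 : z = c1
        · subst hz1; simp [h1]
        · by_cases hz2 : z = c2
          · subst hz2; simp [h2]
          · simp [hz1, hz2]
      have hc1X2 : c1 ∉ insert c2 ((insert c1 (insert c2 X1))ᶜ) := by
        simp [hne, hc1N]
      have hc2X2 : c2 ∉ (insert c1 (insert c2 X1))ᶜ := by simp
      have hsum2 : ∑ j ∈ X1ᶜ, y' j
          = ∑ j ∈ (insert c1 (insert c2 X1))ᶜ, y' j + y' c1 + y' c2 := by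
        rw [← hins, Finset.sum_insert hc1X2, Finset.sum_insert hc2X2]
        ring
      have hcomplx := Finset.sum_compl_add_sum X1 x'
      have hsuby : ∑ j ∈ X1ᶜ, y' j = ∑ j ∈ X1ᶜ, v j - ∑ j ∈ X1ᶜ, x' j := by
        rw [← Finset.sum_sub_distrib]
        exact Finset.sum_congr rfl (fun j _ => hvxy j)
      rw [← hsum2, hsuby]
      linarith
  · rintro ⟨x, y, hx, hy, h⟩
    refine ⟨x, y, fun X1 c1 c2 hne h1 h2 hX1K hNK => ?_⟩
    obtain ⟨hL, hV⟩ := h X1 c1 c2 hne h1 h2 hX1K hNK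
    refine ⟨hL, hV, fun _ _ => ?_⟩
    have := hx c2
    have := hy c2
    linarith
end
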